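/- arXiv:2210.08463 — 13 statements merged into one kernel-verified Lean document; each statement's English description precedes it below -/
import Mathlib

section
/- Let q be a prime power, m a positive integer, n = (q^m - 1)/(q+1) (assuming q+1 divides q^m-1), and h a positive integer divisible by q+1 with 0 < h < q^m - 1. Then h is a q-cyclotomic coset leader modulo q^m - 1 if and only if h/(q+1) is a q-cyclotomic coset leader modulo n. -/
/-- `h` is a q-cyclotomic coset leader modulo `n`: `h * q^j mod n ≥ h` for all `j`. -/
theorem stmt_0 (q m h : ℕ) (hq : IsPrimePow q) (hm : 0 < m)
    (hdvd : (q + 1) ∣ (q ^ m - 1)) (hh : 0 < h) (hhd : (q + 1) ∣ h)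
    (hlt : h < q ^ m - 1) :
    (∀ j : ℕ, h ≤ (h * q ^ j) % (q ^ m - 1)) ↔
      (∀ j : ℕ, h / (q + 1) ≤ (h / (q + 1) * q ^ j) % ((q ^ m - 1) / (q + 1))) := by
  obtain ⟨a, ha⟩ := hhd
  obtain ⟨b, hb⟩ := hdvd
  have hd : 0 < q + 1 := Nat.succ_pos q
  have h1 : h / (q + 1) = a := by rw [ha, Nat.mul_div_cancel_left _ hd]
  have h2 : (q ^ m - 1) / (q + 1) = b := by rw [hb, Nat.mul_div_cancel_left _ hd]
  rw [h1, h2]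
  have key : ∀ j : ℕ, (h * q ^ j) % (q ^ m - 1) = (q + 1) * ((a * q ^ j) % b) := by
    intro j
    rw [ha, hb, mul_assoc, Nat.mul_mod_mul_left]
  constructor
  · intro H j
    have := H j
    rw [key j, ha] at this
    exact Nat.le_of_mul_le_mul_left this hd
  · intro H j
    rw [key j, ha]
    exact Nat.mul_le_mul_left _ (H j)
end

section
/- Let q be a prime power and m ≥ 4 an even integer with m ≡ 0 (mod 4). Then q+1 divides (q-1)·q^(m-1) - q^(m/2) - 1, and ((q-1)·q^(m-1) - q^(m/2) - 1)/(q+1) is the largest q-cyclotomic coset leader modulo n = (q^m - 1)/(q+1). -/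
lemma heven (q : ℕ) (hq : 2 ≤ q) (k : ℕ) (hk : k % 2 = 0) : (q+1) ∣ q^k - 1 := by
  obtain ⟨k', rfl⟩ : ∃ k', k = 2*k' := ⟨k/2, by omega⟩
  rw [pow_mul]
  refine dvd_trans ⟨q - 1, ?_⟩ (by simpa using Nat.sub_dvd_pow_sub_pow (q^2) 1 k')
  have h1 : 1 ≤ q := by omega
  zify [h1, show 1 ≤ q^2 from Nat.one_le_pow _ _ (by omega)]
  ring

lemma hodd (q : ℕ) (hq : 2 ≤ q) (k : ℕ) (hk : k % 2 = 1) : (q+1) ∣ q^k + 1 := by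
  have h1 : q * q^(k-1) = q^k := by
    rw [← pow_succ']; congr 1; omega
  have h2 : 1 ≤ q^(k-1) := Nat.one_le_pow _ _ (by omega)
  have h3 : q * (q^(k-1) - 1) + (q + 1) = q^k + 1 := by
    rw [Nat.mul_sub, h1]; have h4 : q ≤ q^k := by calc q = q*1 := by ring
                                                       _ ≤ q * q^(k-1) := by
                                                          exact Nat.mul_le_mul_left q h2
                                                       _ = q^k := h1
    omega
  rw [← h3]
  exact dvd_add (Dvd.dvd.mul_left (heven q hq (k-1) (by omega)) q) dvd_rfl

lemma hqm2 (q : ℕ) (hq : 2 ≤ q) (e : ℕ) (he : e % 2 = 1) : (q+1) ∣ (q-1)*q^e - 2 := by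
  have h1 : (q+1) ∣ (q-1) * (q^e + 1) := Dvd.dvd.mul_left (hodd q hq e he) _
  have h2 : (q-1)*q^e - 2 = (q-1)*(q^e+1) - (q+1) := by
    have h3 : (q-1)*(q^e+1) = (q-1)*q^e + (q-1) := by ring
    have h4 : 1 ≤ q^e := Nat.one_le_pow _ _ (by omega)
    have h5 : q - 1 ≤ (q-1) * q^e := Nat.le_mul_of_pos_right _ (by omega)
    omega
  rw [h2]
  exact Nat.dvd_sub h1 dvd_rfl

lemma rot (q a b t j : ℕ) (hq : 2 ≤ q) (hb : b < q ^ t)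
    (hD : a * q ^ t + b < q ^ (t + j) - 1) :
    (a * q ^ t + b) * q ^ j % (q ^ (t + j) - 1) = b * q ^ j + a := by
  have hq0 : 0 < q := by omega
  have ht : 0 < q ^ t := pow_pos hq0 t
  have hj : 0 < q ^ j := pow_pos hq0 j
  have htj : q ^ t * q ^ j = q ^ (t + j) := (pow_add q t j).symm
  have hN : 0 < q ^ (t+j) := pow_pos hq0 _
  have ha : a < q ^ j := by
    by_contra h; push_neg at h
    have : q ^ j * q ^ t ≤ a * q ^ t := Nat.mul_le_mul_right _ h
    rw [mul_comm (q^j) (q^t), htj] at this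
    omega
  have hbj2 : b*q^j + q^j ≤ q^(t+j) := by
    have h1 : (b+1)*q^j ≤ q^t * q^j := Nat.mul_le_mul_right _ (by omega)
    have h2 : (b+1)*q^j = b*q^j + q^j := by ring
    omega
  have hid2 : (q^t - 1)*q^j = q^(t+j) - q^j := by rw [Nat.sub_mul, one_mul, htj]
  have hid3 : (q^j - 1)*q^t = q^(t+j) - q^t := by
    rw [Nat.sub_mul, one_mul, mul_comm, htj]
  have hr : b * q ^ j + a < q ^ (t + j) - 1 := by
    rcases Nat.lt_or_ge (b * q^j + a) (q^(t+j) - 1) with h | h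
    · exact h
    · exfalso
      have ha' : a = q^j - 1 := by omega
      have hb2 : b * q^j = q^(t+j) - q^j := by omega
      have hb' : b = q^t - 1 := Nat.eq_of_mul_eq_mul_right hj (by omega)
      rw [ha', hb'] at hD
      omega
  have key : (a*q^t + b) * q^j = a * (q^(t+j) - 1) + (b*q^j + a) := by
    have h2 : a * (q^(t+j) - 1) = a * q^(t+j) - a := by rw [Nat.mul_sub, mul_one]
    have h3 : a * q^(t+j) = a * q^t * q^j := by rw [← htj]; ring
    have h4 : a ≤ a * q^(t+j) := Nat.le_mul_of_pos_right _ hN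
    have h5 : (a*q^t + b) * q^j = a*q^t*q^j + b*q^j := by ring
    omega
  rw [key, add_comm (a * (q^(t+j)-1)), Nat.add_mul_mod_self_right,
    Nat.mod_eq_of_lt hr]

lemma dig (q : ℕ) (hq : 2 ≤ q) : ∀ t x : ℕ, x < q ^ t - 1 →
    ∃ k < t, x % q ^ (k+1) < (q-1) * q ^ k ∧ x % q ^ k = q ^ k - 1 := by
  intro t
  induction t with
  | zero => intro x hx; simp at hx
  | succ t ih =>
    intro x hx
    have hpt : 0 < q^t := pow_pos (by omega) _
    have hq1 : q^t * q = q^(t+1) := (pow_succ q t).symm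
    by_cases h : x % q ^ t = q ^ t - 1
    · refine ⟨t, by omega, ?_, h⟩
      have hpt1 : 0 < q^(t+1) := pow_pos (by omega) _
      have hx1 : x < q^(t+1) := by omega
      rw [Nat.mod_eq_of_lt hx1]
      have hd := Nat.div_add_mod x (q^t)
      rw [h] at hd
      have hdiv : x / q^t ≤ q - 2 := by
        by_contra hcon; push_neg at hcon
        have h5 : q^t * (q-1) ≤ q^t * (x / q^t) := Nat.mul_le_mul_left _ (by omega)
        have h6 : q^t * (q-1) = q^(t+1) - q^t := by rw [Nat.mul_sub, mul_one, hq1]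
        omega
      have h7 : q^t * (x/q^t) ≤ q^t * (q-2) := Nat.mul_le_mul_left _ hdiv
      have h9 : q^t * (q - 2) + q^t = q^t * (q-1) := by
        rw [← Nat.mul_succ]; congr 1; omega
      have h10 : q^t * (q-1) = (q-1)*q^t := mul_comm _ _
      omega
    · have hm : x % q^t < q^t := Nat.mod_lt _ hpt
      obtain ⟨k, hk, h1, h2⟩ := ih (x % q^t) (by omega)
      refine ⟨k, by omega, ?_, ?_⟩
      · rw [← Nat.mod_mod_of_dvd x (pow_dvd_pow q (by omega : k+1 ≤ t))]; exact h1
      · rw [← Nat.mod_mod_of_dvd x (pow_dvd_pow q (by omega : k ≤ t))]; exact h2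

lemma main2 (q s m v : ℕ) (hq : 2 ≤ q) (hs : 2 ≤ s) (hm : m = 2*s) (hv : v < m) :
    (q-1)*q^(m-1) - q^s - 1 ≤ ((q-1)*q^(m-1) - q^s - 1) * q^v % (q^m - 1) := by
  subst hm
  have hle : ∀ a b : ℕ, a ≤ b → q^a ≤ q^b := fun a b h => Nat.pow_le_pow_right (by omega) h
  have hlt : ∀ a b : ℕ, a < b → q^a < q^b := fun a b h => Nat.pow_lt_pow_right (by omega) h
  have hp : ∀ i : ℕ, 0 < q^i := fun i => pow_pos (by omega) i
  have hqm : q * q^(2*s-1) = q^(2*s) := by rw [← pow_succ']; congr 1; omega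
  have hA : (q-1)*q^(2*s-1) + q^(2*s-1) = q^(2*s) := by
    rw [Nat.sub_mul, one_mul, hqm]
    have h1 : q^(2*s-1) ≤ q^(2*s) := hle _ _ (by omega)
    omega
  have hD0eq : (q-1)*q^(2*s-1) - q^s - 1 = q^(2*s) - q^(2*s-1) - q^s - 1 := by omega
  rw [hD0eq]
  have h6 : 2*q^(2*s-1) ≤ q^(2*s) := by rw [← hqm]; exact Nat.mul_le_mul_right _ hq
  have hss : q^s < q^(2*s-1) := hlt _ _ (by omega)
  have h1s : 0 < q^s := hp s
  have h1t : 0 < q^(2*s-1) := hp _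
  have h1m : 0 < q^(2*s) := hp _
  rcases (by omega : v = 0 ∨ (1 ≤ v ∧ v ≤ s-1) ∨ v = s ∨ (s+1 ≤ v ∧ v ≤ 2*s-1)) with
    h0 | ⟨hv1, hv2⟩ | h0 | ⟨hv1, hv2⟩
  · subst h0
    rw [pow_zero, mul_one, Nat.mod_eq_of_lt (by omega)]
  · -- 1 ≤ v ≤ s-1
    have e1 : q^(2*s-v) * q^v = q^(2*s) := by rw [← pow_add]; congr 1; omega
    have e2 : q^(v-1) * q^(2*s-v) = q^(2*s-1) := by rw [← pow_add]; congr 1; omega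
    have e3 : q^v * q^(2*s-v) = q^(2*s) := by rw [← pow_add]; congr 1; omega
    have e4 : q^s * q^v = q^(s+v) := by rw [← pow_add]
    have f1 : q^(s+v) ≤ q^(2*s-1) := hle _ _ (by omega)
    have f2 : q^(v-1) ≤ q^s := hle _ _ (by omega)
    have f3 : q^(v-1) < q^v := hlt _ _ (by omega)
    have f4 : q^s < q^(2*s-v) := hlt _ _ (by omega)
    have f5 : q^(2*s-v) ≤ q^(2*s-1) := hle _ _ (by omega)
    have f6 : q^v ≤ q^(2*s-1) := hle _ _ (by omega)
    have g1 : 0 < q^(2*s-v) := hp _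
    have g2 : 0 < q^v := hp _
    have g3 : 0 < q^(v-1) := hp _
    have g4 : 0 < q^(s+v) := hp _
    have hab : (q^v - q^(v-1) - 1) * q^(2*s-v) + (q^(2*s-v) - q^s - 1)
        = q^(2*s) - q^(2*s-1) - q^s - 1 := by
      rw [Nat.sub_mul, Nat.sub_mul, one_mul, e3, e2]
      omega
    have hrot := rot q (q^v - q^(v-1) - 1) (q^(2*s-v) - q^s - 1) (2*s-v) v hq
      (by omega) (by rw [hab, show 2*s-v+v = 2*s from by omega]; omega)
    rw [hab, show 2*s-v+v = 2*s from by omega] at hrot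
    rw [hrot]
    have hbv : (q^(2*s-v) - q^s - 1)*q^v = q^(2*s) - q^(s+v) - q^v := by
      rw [Nat.sub_mul, Nat.sub_mul, one_mul, e1, e4]
    rw [hbv]
    omega
  · -- v = s
    subst h0
    have e5 : q^v * q^v = q^(2*v) := by rw [← pow_add]; congr 1; omega
    have e6 : q^(v-1) * q^v = q^(2*v-1) := by rw [← pow_add]; congr 1; omega
    have h7 : q^v * q = q^(v+1) := (pow_succ q v).symm
    have h8 : q^(v+1) ≤ q^(2*v-1) := hle _ _ (by omega)
    have h10 : q^(v-1) * q = q^v := by rw [← pow_succ]; congr 1; omega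
    have h11 : 2 ≤ q^(v-1) := by
      calc 2 ≤ q := hq
      _ = q^1 := (pow_one q).symm
      _ ≤ q^(v-1) := hle _ _ (by omega)
    have h12 : 2*q^v ≤ q^(v+1) := by
      have := Nat.mul_le_mul_left (q^v) hq
      omega
    have g3 : 0 < q^(v-1) := hp _
    have hab : (q^v - q^(v-1) - 2) * q^v + (q^v - 1)
        = q^(2*v) - q^(2*v-1) - q^v - 1 := by
      rw [Nat.sub_mul, Nat.sub_mul, e5, e6]
      omega
    have hrot := rot q (q^v - q^(v-1) - 2) (q^v - 1) v v hq
      (by omega) (by rw [hab, show v+v = 2*v from by omega]; omega)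
    rw [hab, show v+v = 2*v from by omega] at hrot
    rw [hrot]
    have hbv : (q^v - 1)*q^v = q^(2*v) - q^v := by
      rw [Nat.sub_mul, one_mul, e5]
    rw [hbv]
    have h13 : q^(v-1) ≤ q^v := hle _ _ (by omega)
    omega
  · -- s+1 ≤ v ≤ 2s-1
    have e1 : q^(2*s-v) * q^v = q^(2*s) := by rw [← pow_add]; congr 1; omega
    have e2 : q^(v-1) * q^(2*s-v) = q^(2*s-1) := by rw [← pow_add]; congr 1; omega
    have e3 : q^v * q^(2*s-v) = q^(2*s) := by rw [← pow_add]; congr 1; omega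
    have e7 : q^(v-s) * q^(2*s-v) = q^s := by rw [← pow_add]; congr 1; omega
    have f1 : q^(2*s-v) ≤ q^s := hle _ _ (by omega)
    have f2 : 2*q^s ≤ q^(s+1) := by
      have h7 : q^s * q = q^(s+1) := (pow_succ q s).symm
      have := Nat.mul_le_mul_left (q^s) hq
      omega
    have f3 : q^(s+1) ≤ q^(2*s-1) := hle _ _ (by omega)
    have f4 : q^(v-s) < q^(v-1) := hlt _ _ (by omega)
    have f5 : q^(v-1) * q = q^v := by rw [← pow_succ]; congr 1; omega
    have f6 : 2*q^(v-1) ≤ q^v := by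
      have := Nat.mul_le_mul_left (q^(v-1)) hq
      omega
    have f7 : 0 < q^(v-1) := hp _
    have f8 : 0 < q^(v-s) := hp _
    have f9 : q^(v-1) ≤ q^(2*s-1) := hle _ _ (by omega)
    have f10 : q^(v-s) ≤ q^s := hle _ _ (by omega)
    have g1 : 0 < q^(2*s-v) := hp _
    have g2 : 0 < q^v := hp _
    have hab : (q^v - q^(v-1) - q^(v-s) - 1) * q^(2*s-v) + (q^(2*s-v) - 1)
        = q^(2*s) - q^(2*s-1) - q^s - 1 := by
      rw [Nat.sub_mul, Nat.sub_mul, Nat.sub_mul, one_mul, e3, e2, e7]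
      omega
    have hrot := rot q (q^v - q^(v-1) - q^(v-s) - 1) (q^(2*s-v) - 1) (2*s-v) v hq
      (by omega) (by rw [hab, show 2*s-v+v = 2*s from by omega]; omega)
    rw [hab, show 2*s-v+v = 2*s from by omega] at hrot
    rw [hrot]
    have hbv : (q^(2*s-v) - 1)*q^v = q^(2*s) - q^v := by
      rw [Nat.sub_mul, one_mul, e1]
    rw [hbv]
    have f11 : q^v ≤ q^(2*s-1) := hle _ _ (by omega)
    omega

lemma main3 (q s m D : ℕ) (hq : 2 ≤ q) (hs : 2 ≤ s) (hse : s % 2 = 0) (hm : m = 2*s)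
    (hdvd : (q+1) ∣ D)
    (hlow : q^m < D + q^(m-1) + q^s + 1)
    (hhigh : D + 1 < q^m) :
    ∃ j : ℕ, D * q^j % (q^m - 1) < D := by
  subst hm
  have hle : ∀ a b : ℕ, a ≤ b → q^a ≤ q^b := fun a b h => Nat.pow_le_pow_right (by omega) h
  have hlt : ∀ a b : ℕ, a < b → q^a < q^b := fun a b h => Nat.pow_lt_pow_right (by omega) h
  have hp : ∀ i : ℕ, 0 < q^i := fun i => pow_pos (by omega) i
  have hqm : q * q^(2*s-1) = q^(2*s) := by rw [← pow_succ']; congr 1; omega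
  have hA : (q-1)*q^(2*s-1) + q^(2*s-1) = q^(2*s) := by
    rw [Nat.sub_mul, one_mul, hqm]
    have h1 : q^(2*s-1) ≤ q^(2*s) := hle _ _ (by omega)
    omega
  have hAge : q^(2*s-1) ≤ (q-1)*q^(2*s-1) := Nat.le_mul_of_pos_left _ (by omega)
  have hss : q^s < q^(2*s-1) := hlt _ _ (by omega)
  have h1s : 0 < q^s := hp s
  have h1t : 0 < q^(2*s-1) := hp _
  have hq21 : q ≤ q^(2*s-1) := by
    calc q = q^1 := (pow_one q).symm
    _ ≤ q^(2*s-1) := hle _ _ (by omega)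
  have hqs1 : q ≤ q^(s-1) := by
    calc q = q^1 := (pow_one q).symm
    _ ≤ q^(s-1) := hle _ _ (by omega)
  by_cases hc : (q-1)*q^(2*s-1) ≤ D
  · -- Case 1: top digit q-1
    have hr0 : D = (q-1)*q^(2*s-1) + (D - (q-1)*q^(2*s-1)) := by omega
    have hrlt : (D - (q-1)*q^(2*s-1)) + 1 < q^(2*s-1) := by omega
    obtain ⟨k, hk, h1, _⟩ := dig q hq (2*s-1) (D - (q-1)*q^(2*s-1)) (by omega)
    have ekk : (q-1)*q^(2*s-1) = ((q-1)*q^(2*s-2-k)) * q^(k+1) := by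
      rw [mul_assoc, ← pow_add]
      congr 2
      omega
    have hr0' : D = ((q-1)*q^(2*s-2-k)) * q^(k+1) + (D - (q-1)*q^(2*s-1)) := by omega
    have hDmod : D % q^(k+1) = (D - (q-1)*q^(2*s-1)) % q^(k+1) := by
      conv_lhs => rw [hr0']
      rw [add_comm, Nat.add_mul_mod_self_right]
    have hdm := Nat.div_add_mod D (q^(k+1))
    have hblt : D % q^(k+1) < q^(k+1) := Nat.mod_lt _ (hp _)
    have hab : (D / q^(k+1)) * q^(k+1) + D % q^(k+1) = D := by
      rw [mul_comm]; exact hdm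
    have hDlt : (D / q^(k+1)) * q^(k+1) + D % q^(k+1) < q^((k+1)+(2*s-1-k)) - 1 := by
      rw [hab, show (k+1)+(2*s-1-k) = 2*s from by omega]; omega
    have hrot := rot q (D / q^(k+1)) (D % q^(k+1)) (k+1) (2*s-1-k) hq hblt hDlt
    rw [hab, show (k+1)+(2*s-1-k) = 2*s from by omega] at hrot
    refine ⟨2*s-1-k, ?_⟩
    rw [hrot]
    have hb1 : D % q^(k+1) < (q-1)*q^k := by omega
    have ha2 : D / q^(k+1) < q^(2*s-1-k) := by
      apply (Nat.div_lt_iff_lt_mul (hp (k+1))).mpr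
      have h8 : q^(2*s-1-k) * q^(k+1) = q^(2*s) := by rw [← pow_add]; congr 1; omega
      omega
    calc (D % q^(k+1)) * q^(2*s-1-k) + D / q^(k+1)
        < (D % q^(k+1) + 1) * q^(2*s-1-k) := by
          have h9 : (D % q^(k+1) + 1) * q^(2*s-1-k)
              = (D % q^(k+1)) * q^(2*s-1-k) + q^(2*s-1-k) := by ring
          omega
      _ ≤ ((q-1)*q^k) * q^(2*s-1-k) := Nat.mul_le_mul_right _ (by omega)
      _ = (q-1)*q^(2*s-1) := by
          rw [mul_assoc, ← pow_add]
          congr 2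
          omega
      _ ≤ D := hc
  · -- Case 2: top digit q-2
    push_neg at hc
    have hLex : (q-1)*q^(2*s-1) ≤ D + q^s := by omega
    have hL : D + q^s = (q-1)*q^(2*s-1) + (D + q^s - (q-1)*q^(2*s-1)) := by omega
    set L := D + q^s - (q-1)*q^(2*s-1) with hLdef
    have hLlt : L < q^s := by omega
    have hC9 : q^s * ((q-1)*q^(s-1)) = (q-1)*q^(2*s-1) := by
      rw [mul_left_comm, ← pow_add, show s+(s-1) = 2*s-1 from by omega]
    have hposC : 0 < (q-1)*q^(s-1) := Nat.mul_pos (by omega) (hp _)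
    have hCprod : q^s * ((q-1)*q^(s-1) - 1) + q^s = (q-1)*q^(2*s-1) := by
      rw [Nat.mul_sub, hC9, mul_one]
      omega
    have hDC : D = q^s * ((q-1)*q^(s-1) - 1) + L := by omega
    have hmodL : D % q^s = L := by rw [hDC, Nat.mul_add_mod, Nat.mod_eq_of_lt hLlt]
    by_cases h2a : L + 1 = q^s
    · exfalso
      have hX : (q+1) ∣ (q-1)*q^(2*s-1) - 2 := hqm2 q hq _ (by omega)
      have hDA : D + 1 = (q-1)*q^(2*s-1) := by omega
      have h2 : (q+1) ∣ D - 1 := by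
        rw [show D - 1 = (q-1)*q^(2*s-1) - 2 from by omega]; exact hX
      have h3 : (q+1) ∣ 1 := by
        have h4 := Nat.dvd_sub hdvd h2
        rw [show D - (D-1) = 1 from by omega] at h4
        exact h4
      have := Nat.le_of_dvd one_pos h3
      omega
    · have hLlt1 : L < q^s - 1 := by omega
      obtain ⟨k, hk, h1, h2⟩ := dig q hq s L hLlt1
      have hDmod : D % q^(k+1) = L % q^(k+1) := by
        rw [← Nat.mod_mod_of_dvd D (pow_dvd_pow q (by omega : k+1 ≤ s)), hmodL]
      have hdm2 := Nat.div_add_mod (L % q^(k+1)) (q^k)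
      have hmm : L % q^(k+1) % q^k = q^k - 1 := by
        rw [Nat.mod_mod_of_dvd _ (pow_dvd_pow q (by omega : k ≤ k+1)), h2]
      set e := L % q^(k+1) / q^k with hedef
      have hpk := hp k
      have hM : L % q^(k+1) = q^k * e + (q^k - 1) := by omega
      have he : e ≤ q - 2 := by
        by_contra hcon
        push_neg at hcon
        have h5 : q^k * (q-1) ≤ q^k * e := Nat.mul_le_mul_left _ (by omega)
        have h6' : q^k * (q-1) = (q-1) * q^k := mul_comm _ _
        omega
      have hdm := Nat.div_add_mod D (q^(k+1))
      have hblt : D % q^(k+1) < q^(k+1) := Nat.mod_lt _ (hp _)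
      have hab : (D / q^(k+1)) * q^(k+1) + D % q^(k+1) = D := by
        rw [mul_comm]; exact hdm
      have hDlt : (D / q^(k+1)) * q^(k+1) + D % q^(k+1) < q^((k+1)+(2*s-1-k)) - 1 := by
        rw [hab, show (k+1)+(2*s-1-k) = 2*s from by omega]; omega
      have hrot := rot q (D / q^(k+1)) (D % q^(k+1)) (k+1) (2*s-1-k) hq hblt hDlt
      rw [hab, show (k+1)+(2*s-1-k) = 2*s from by omega] at hrot
      by_cases hek : e = q - 2
      · by_cases hks : k ≤ s - 2
        · refine ⟨2*s-1-k, ?_⟩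
          rw [hrot]
          have hb1 : D % q^(k+1) + 1 = (q-1)*q^k := by
            have h7 : q^k * (q-2) + q^k = q^k * (q-1) := by
              rw [← Nat.mul_succ]; congr 1; omega
            have h6' : q^k * (q-1) = (q-1) * q^k := mul_comm _ _
            rw [hDmod, hM, hek]
            omega
          have ha2 : D / q^(k+1) < (q-1)*q^(2*s-2-k) := by
            apply (Nat.div_lt_iff_lt_mul (hp (k+1))).mpr
            have h8 : (q-1)*q^(2*s-2-k) * q^(k+1) = (q-1)*q^(2*s-1) := by
              rw [mul_assoc, ← pow_add, show 2*s-2-k+(k+1) = 2*s-1 from by omega]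
            omega
          have hbq : (D % q^(k+1)) * q^(2*s-1-k) + q^(2*s-1-k) = (q-1)*q^(2*s-1) := by
            have h9 : ((D % q^(k+1)) + 1) * q^(2*s-1-k)
                = (D % q^(k+1)) * q^(2*s-1-k) + q^(2*s-1-k) := by ring
            rw [← h9, hb1, mul_assoc, ← pow_add, show k+(2*s-1-k) = 2*s-1 from by omega]
          have hf1 : q^s ≤ q^(2*s-2-k) := hle _ _ (by omega)
          have hf2 : (q-1)*q^(2*s-2-k) + q^(2*s-2-k) = q^(2*s-1-k) := by
            have h10 : q * q^(2*s-2-k) = q^(2*s-1-k) := by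
              rw [← pow_succ']; congr 1; omega
            rw [Nat.sub_mul, one_mul, h10]
            have h11 : q^(2*s-2-k) ≤ q^(2*s-1-k) := hle _ _ (by omega)
            omega
          omega
        · exfalso
          have hks1 : k = s - 1 := by omega
          have hLval : L + 1 = (q-1)*q^(s-1) := by
            have h7 : q^(s-1) * (q-2) + q^(s-1) = q^(s-1) * (q-1) := by
              rw [← Nat.mul_succ]; congr 1; omega
            have h6' : q^(s-1) * (q-1) = (q-1) * q^(s-1) := mul_comm _ _
            have h8 : L % q^(k+1) = L := by
              rw [show k+1 = s from by omega]
              exact Nat.mod_eq_of_lt hLlt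
            have h9 : 0 < q^(s-1) := hp _
            rw [h8, hks1, hek] at hM
            omega
          have hX : (q+1) ∣ (q-1)*q^(2*s-1) - 2 := hqm2 q hq _ (by omega)
          have hY : (q+1) ∣ (q-1)*q^(s-1) - 2 := hqm2 q hq _ (by omega)
          have hZ : (q+1) ∣ q^s - 1 := heven q hq s hse
          have hXY : (q+1) ∣ ((q-1)*q^(2*s-1) - 2) + ((q-1)*q^(s-1) - 2) := dvd_add hX hY
          have hDZ : (q+1) ∣ D + (q^s - 1) := dvd_add hdvd hZ
          have hY2 : q^(s-1) ≤ (q-1)*q^(s-1) := Nat.le_mul_of_pos_left _ (by omega)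
          have hkey : D + (q^s - 1) = ((q-1)*q^(2*s-1) - 2) + ((q-1)*q^(s-1) - 2) + 2 := by
            omega
          rw [hkey] at hDZ
          have h9 := Nat.dvd_sub hDZ hXY
          rw [show (((q-1)*q^(2*s-1) - 2) + ((q-1)*q^(s-1) - 2) + 2)
              - (((q-1)*q^(2*s-1) - 2) + ((q-1)*q^(s-1) - 2)) = 2 from by omega] at h9
          have := Nat.le_of_dvd (by omega) h9
          omega
      · -- e ≤ q - 3
        refine ⟨2*s-1-k, ?_⟩
        rw [hrot]
        have hb2 : D % q^(k+1) + 1 ≤ (q-2)*q^k := by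
          rw [hDmod, hM]
          have h5 : q^k * (e+1) ≤ q^k * (q-2) := Nat.mul_le_mul_left _ (by omega)
          have h6' : q^k * (q-2) = (q-2)*q^k := mul_comm _ _
          have h7 : q^k * (e+1) = q^k*e + q^k := by ring
          omega
        have ha2 : D / q^(k+1) < q^(2*s-1-k) := by
          apply (Nat.div_lt_iff_lt_mul (hp (k+1))).mpr
          have h8 : q^(2*s-1-k) * q^(k+1) = q^(2*s) := by rw [← pow_add]; congr 1; omega
          omega
        have hc1 : (D % q^(k+1)) * q^(2*s-1-k) + D / q^(k+1)
            < (D % q^(k+1) + 1) * q^(2*s-1-k) := by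
          have h9 : (D % q^(k+1) + 1) * q^(2*s-1-k)
              = (D % q^(k+1)) * q^(2*s-1-k) + q^(2*s-1-k) := by ring
          omega
        have hc2 : (D % q^(k+1) + 1) * q^(2*s-1-k) ≤ ((q-2)*q^k) * q^(2*s-1-k) :=
          Nat.mul_le_mul_right _ hb2
        have hc3 : ((q-2)*q^k) * q^(2*s-1-k) = (q-2)*q^(2*s-1) := by
          rw [mul_assoc, ← pow_add, show k+(2*s-1-k) = 2*s-1 from by omega]
        have hc4 : (q-2)*q^(2*s-1) + q^(2*s-1) = (q-1)*q^(2*s-1) := by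
          rw [← Nat.succ_mul]; congr 1; omega
        omega

theorem stmt_1 (q m : ℕ) (hq : IsPrimePow q) (hm : 4 ≤ m) (hm4 : m % 4 = 0) :
    (q + 1) ∣ ((q - 1) * q ^ (m - 1) - q ^ (m / 2) - 1) ∧
    (∀ j : ℕ,
        ((q - 1) * q ^ (m - 1) - q ^ (m / 2) - 1) / (q + 1) ≤
          (((q - 1) * q ^ (m - 1) - q ^ (m / 2) - 1) / (q + 1) * q ^ j) %
            ((q ^ m - 1) / (q + 1))) ∧
    (∀ δ : ℕ, ((q - 1) * q ^ (m - 1) - q ^ (m / 2) - 1) / (q + 1) < δ →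
        δ < (q ^ m - 1) / (q + 1) →
        ∃ j : ℕ, (δ * q ^ j) % ((q ^ m - 1) / (q + 1)) < δ) := by
  have hq2 : 2 ≤ q := hq.two_le
  obtain ⟨s, rfl⟩ : ∃ s, m = 2*s := ⟨m/2, by omega⟩
  have hs2 : 2 ≤ s := by omega
  have hse : s % 2 = 0 := by omega
  rw [show 2*s/2 = s from by omega]
  have hle : ∀ a b : ℕ, a ≤ b → q^a ≤ q^b := fun a b h => Nat.pow_le_pow_right (by omega) h
  have hlt : ∀ a b : ℕ, a < b → q^a < q^b := fun a b h => Nat.pow_lt_pow_right (by omega) h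
  have hp : ∀ i : ℕ, 0 < q^i := fun i => pow_pos (by omega) i
  have hqm : q * q^(2*s-1) = q^(2*s) := by rw [← pow_succ']; congr 1; omega
  have hA : (q-1)*q^(2*s-1) + q^(2*s-1) = q^(2*s) := by
    rw [Nat.sub_mul, one_mul, hqm]
    have h1 : q^(2*s-1) ≤ q^(2*s) := hle _ _ (by omega)
    omega
  have hAge : q^(2*s-1) ≤ (q-1)*q^(2*s-1) := Nat.le_mul_of_pos_left _ (by omega)
  have hss : q^s < q^(2*s-1) := hlt _ _ (by omega)
  have h1s : 0 < q^s := hp s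
  have h1t : 0 < q^(2*s-1) := hp _
  -- Part 1 : divisibility
  have hPart1 : (q + 1) ∣ ((q - 1) * q ^ (2*s - 1) - q ^ s - 1) := by
    have e1 : q^s*(q^(s-1)+1) = q^(2*s-1) + q^s := by
      rw [Nat.mul_add, mul_one, ← pow_add, show s+(s-1) = 2*s-1 from by omega]
    have hid : (q-1)*q^(2*s-1) - q^s - 1 = (q^(2*s) - 1) - q^s*(q^(s-1)+1) := by omega
    rw [hid]
    exact Nat.dvd_sub (heven q hq2 (2*s) (by omega))
      (Dvd.dvd.mul_left (hodd q hq2 (s-1) (by omega)) (q^s))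
  have hNdvd : (q+1) ∣ q^(2*s) - 1 := heven q hq2 (2*s) (by omega)
  have hn : ((q^(2*s) - 1)/(q+1)) * (q+1) = q^(2*s) - 1 := Nat.div_mul_cancel hNdvd
  have hd0 : (((q-1)*q^(2*s-1) - q^s - 1)/(q+1)) * (q+1)
      = (q-1)*q^(2*s-1) - q^s - 1 := Nat.div_mul_cancel hPart1
  have hD0sum : ((q-1)*q^(2*s-1) - q^s - 1) + q^s + 1 + q^(2*s-1) = q^(2*s) := by omega
  have hconv : ∀ d x : ℕ, (d * x) % ((q^(2*s) - 1)/(q+1)) * (q+1)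
      = (d * (q+1) * x) % (q^(2*s) - 1) := by
    intro d x
    calc (d * x) % ((q^(2*s) - 1)/(q+1)) * (q+1)
        = (d * x * (q+1)) % (((q^(2*s) - 1)/(q+1)) * (q+1)) :=
          (Nat.mul_mod_mul_right (q+1) (d*x) _).symm
      _ = (d * (q+1) * x) % (q^(2*s) - 1) := by rw [hn, mul_right_comm]
  refine ⟨hPart1, ?_, ?_⟩
  · -- Part 2
    intro j
    have hnd : (q^(2*s)-1)/(q+1) ∣ (q^(2*s)-1) := Nat.div_dvd_of_dvd hNdvd
    have hqe : 1 ≡ q^(2*s) [MOD (q^(2*s)-1)/(q+1)] :=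
      (Nat.modEq_iff_dvd' (Nat.one_le_pow _ _ (by omega))).mpr hnd
    have e2 : q^j = (q^(2*s))^(j/(2*s)) * q^(j%(2*s)) := by
      rw [← pow_mul, ← pow_add]; congr 1; exact (Nat.div_add_mod j (2*s)).symm
    have hmodeq : (((q-1)*q^(2*s-1) - q^s - 1)/(q+1)) * q^j
        ≡ (((q-1)*q^(2*s-1) - q^s - 1)/(q+1)) * q^(j%(2*s))
        [MOD (q^(2*s)-1)/(q+1)] := by
      rw [e2]
      have h3 : (1:ℕ)^(j/(2*s)) ≡ (q^(2*s))^(j/(2*s)) [MOD (q^(2*s)-1)/(q+1)] :=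
        hqe.pow _
      have h4 := ((h3.mul_right (q^(j%(2*s)))).mul_left
        (((q-1)*q^(2*s-1) - q^s - 1)/(q+1))).symm
      simpa using h4
    rw [show (((q-1)*q^(2*s-1) - q^s - 1)/(q+1) * q^j) % ((q^(2*s)-1)/(q+1))
        = (((q-1)*q^(2*s-1) - q^s - 1)/(q+1) * q^(j%(2*s))) % ((q^(2*s)-1)/(q+1))
        from hmodeq]
    have h2 := main2 q s (2*s) (j % (2*s)) hq2 hs2 rfl (Nat.mod_lt _ (by omega))
    apply Nat.le_of_mul_le_mul_right _ (show 0 < q+1 by omega)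
    rw [hconv, hd0]
    exact h2
  · -- Part 3
    intro δ h1 h2
    have hDdvd : (q+1) ∣ δ*(q+1) := dvd_mul_left (q+1) δ
    have hb1 : ((((q-1)*q^(2*s-1) - q^s - 1)/(q+1)) + 1) * (q+1) ≤ δ*(q+1) :=
      Nat.mul_le_mul_right _ (by omega)
    have hb2 : ((((q-1)*q^(2*s-1) - q^s - 1)/(q+1)) + 1) * (q+1)
        = ((q-1)*q^(2*s-1) - q^s - 1) + (q+1) := by rw [add_mul, one_mul, hd0]
    have hb3 : (δ+1) * (q+1) ≤ ((q^(2*s)-1)/(q+1)) * (q+1) :=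
      Nat.mul_le_mul_right _ (by omega)
    have hb4 : (δ+1)*(q+1) = δ*(q+1) + (q+1) := by ring
    have hlow' : q^(2*s) < δ*(q+1) + q^(2*s-1) + q^s + 1 := by omega
    have hhigh' : δ*(q+1) + 1 < q^(2*s) := by omega
    obtain ⟨j, hj⟩ := main3 q s (2*s) (δ*(q+1)) hq2 hs2 hse rfl hDdvd hlow' hhigh'
    refine ⟨j, ?_⟩
    by_contra hcon
    push_neg at hcon
    have h5 := Nat.mul_le_mul_right (q+1) hcon
    rw [hconv] at h5
    omega
end

section
/- Let q be a prime power and m ≥ 4 an even integer with m ≡ 2 (mod 4). Then q+1 divides (q-1)·q^(m-1) - q^((m-2)/2) - 1, and ((q-1)·q^(m-1) - q^((m-2)/2) - 1)/(q+1) is the largest q-cyclotomic coset leader modulo n = (q^m - 1)/(q+1). -/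
set_option maxHeartbeats 1000000 in
theorem stmt_2 (q m : ℕ) (hq : IsPrimePow q) (hm : 4 ≤ m) (hm4 : m % 4 = 2) :
    (q + 1) ∣ ((q - 1) * q ^ (m - 1) - q ^ ((m - 2) / 2) - 1) ∧
    (∀ j : ℕ,
        ((q - 1) * q ^ (m - 1) - q ^ ((m - 2) / 2) - 1) / (q + 1) ≤
          (((q - 1) * q ^ (m - 1) - q ^ ((m - 2) / 2) - 1) / (q + 1) * q ^ j) %
            ((q ^ m - 1) / (q + 1))) ∧
    (∀ δ : ℕ, ((q - 1) * q ^ (m - 1) - q ^ ((m - 2) / 2) - 1) / (q + 1) < δ →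
        δ < (q ^ m - 1) / (q + 1) →
        ∃ j : ℕ, (δ * q ^ j) % ((q ^ m - 1) / (q + 1)) < δ) := by
  have hq2 : 2 ≤ q := hq.two_le
  have hq1 : 1 < q := hq2
  obtain ⟨s, rfl⟩ : ∃ s, m = 2 * s := ⟨m / 2, by omega⟩
  have hs3 : 3 ≤ s := by omega
  have hsodd : Odd s := Nat.odd_iff.mpr (by omega)
  -- basic power facts
  have hA4 : 4 ≤ q ^ (s - 1) := by
    calc (4:ℕ) = 2 ^ 2 := by norm_num
    _ ≤ q ^ 2 := Nat.pow_le_pow_left hq2 2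
    _ ≤ q ^ (s - 1) := Nat.pow_le_pow_right (by omega) (by omega)
  have hBA : q ^ s = q * q ^ (s - 1) := by
    conv_lhs => rw [show s = (s-1) + 1 by omega]
    rw [pow_succ]; ring
  have h2A : 2 * q ^ (s-1) ≤ q ^ s := by
    rw [hBA]; exact Nat.mul_le_mul_right _ hq2
  have hB8 : 8 ≤ q ^ s := by omega
  have h2s : q ^ (2*s) = q ^ s * q ^ s := by rw [← pow_add]; congr 1; omega
  have h2s1 : q ^ (2*s - 1) = q ^ s * q ^ (s - 1) := by rw [← pow_add]; congr 1; omega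
  have hN64 : 64 ≤ q ^ (2*s) := by
    calc (64:ℕ) = 8 * 8 := by norm_num
    _ ≤ q ^ s * q ^ s := Nat.mul_le_mul hB8 hB8
    _ = q ^ (2*s) := h2s.symm
  have hM1big : q ^ (s-1) < q ^ (2*s - 1) := Nat.pow_lt_pow_right hq1 (by omega)
  -- t with q^s + 1 = (q+1) * t
  obtain ⟨t, ht⟩ : (q + 1) ∣ q ^ s + 1 := by
    have h2 : ((q : ℤ) + 1) ∣ (q : ℤ) ^ s - (-1 : ℤ) ^ s := by
      simpa using sub_dvd_pow_sub_pow (q : ℤ) (-1) s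
    rw [hsodd.neg_one_pow, sub_neg_eq_add] at h2
    exact_mod_cast h2
  have htpos : 0 < t := by
    rcases Nat.eq_zero_or_pos t with h | h
    · rw [h, mul_zero] at ht; omega
    · exact h
  have hBAz : (q:ℤ) ^ s = (q:ℤ) * (q:ℤ) ^ (s-1) := by exact_mod_cast hBA
  -- N = (q+1) * n with n = t * (q^s - 1)
  have hNfact : q ^ (2*s) - 1 = (q + 1) * (t * (q ^ s - 1)) := by
    rw [← mul_assoc, ← ht, h2s]
    have h1 : 1 ≤ q ^ s := by omega
    have h2 : 1 ≤ q ^ s * q ^ s := Nat.one_le_iff_ne_zero.mpr (by positivity)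
    zify [h1, h2]
    ring
  have hdivn : (q ^ (2*s) - 1) / (q + 1) = t * (q ^ s - 1) := by
    rw [hNfact]; exact Nat.mul_div_cancel_left _ (by omega)
  -- D0 = (q+1) * (t*c),  c = q^s - q^(s-1) - 1
  have hexp : (2*s - 2)/2 = s - 1 := by omega
  have hc2 : q ^ (s-1) ≤ q ^ s := by omega
  have hc3 : 1 ≤ q ^ s - q ^ (s-1) := by omega
  have hD : (q - 1) * q ^ (2*s - 1) - q ^ ((2*s - 2)/2) - 1
      = (q + 1) * (t * (q ^ s - q ^ (s-1) - 1)) := by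
    rw [hexp, ← mul_assoc, ← ht, h2s1]
    have hx1 : q ^ s * q ^ (s-1) ≤ (q - 1) * (q ^ s * q ^ (s-1)) :=
      Nat.le_mul_of_pos_left _ (by omega)
    have hx2 : 8 * q ^ (s-1) ≤ q ^ s * q ^ (s-1) := Nat.mul_le_mul_right _ hB8
    have c1 : q ^ (s-1) ≤ (q - 1) * (q ^ s * q ^ (s-1)) := by omega
    have c2 : 1 ≤ (q - 1) * (q ^ s * q ^ (s-1)) - q ^ (s-1) := by omega
    zify [c1, c2, hc2, hc3, show 1 ≤ q by omega]
    linear_combination (-(q:ℤ)^s) * hBAz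
  have hδeq : ((q - 1) * q ^ (2*s - 1) - q ^ ((2*s - 2)/2) - 1) / (q + 1)
      = t * (q ^ s - q ^ (s-1) - 1) := by
    rw [hD]; exact Nat.mul_div_cancel_left _ (by omega)
  -- D0 + E0 = N
  have hsum : (q + 1) * (t * (q ^ s - q ^ (s-1) - 1)) + (q ^ (2*s - 1) + q ^ (s-1))
      = q ^ (2*s) - 1 := by
    rw [← mul_assoc, ← ht, h2s1, h2s]
    have h2 : 1 ≤ q ^ s * q ^ s := Nat.one_le_iff_ne_zero.mpr (by positivity)
    zify [hc2, hc3, h2]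
    ring
  -- mod-power machinery
  have hmod1 : ∀ w : ℕ, 1 ≤ w → q ^ w ≡ 1 [MOD q ^ w - 1] := by
    intro w hw
    have hp : 1 ≤ q ^ w := Nat.one_le_pow _ _ (by omega)
    show q ^ w % (q ^ w - 1) = 1 % (q ^ w - 1)
    rw [show q ^ w = (q ^ w - 1) + 1 by omega]
    exact Nat.add_mod_left _ _
  have powmod : ∀ w a : ℕ, 1 ≤ w → q ^ a ≡ q ^ (a % w) [MOD q ^ w - 1] := by
    intro w a hw
    calc q ^ a = (q ^ w) ^ (a / w) * q ^ (a % w) := by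
          rw [← pow_mul, ← pow_add]; congr 1; exact (Nat.div_add_mod a w).symm
    _ ≡ 1 ^ (a / w) * q ^ (a % w) [MOD q ^ w - 1] := ((hmod1 w hw).pow _).mul_right _
    _ = q ^ (a % w) := by rw [one_pow, one_mul]
  refine ⟨⟨_, hD⟩, ?_, ?_⟩
  · -- part 2
    intro j
    rw [hδeq, hdivn]
    have hc : q ^ s - q ^ (s-1) - 1 = (q ^ s - 1) - q ^ (s-1) := by omega
    rw [hc]
    have humod : (s - 1 + j) % s < s := Nat.mod_lt _ (by omega)
    have hqu : q ^ ((s - 1 + j) % s) ≤ q ^ (s - 1) :=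
      Nat.pow_le_pow_right (by omega) (by omega)
    have hqu1 : 1 ≤ q ^ ((s - 1 + j) % s) := Nat.one_le_pow _ _ (by omega)
    have e1 : ((q ^ s - 1) - q ^ (s-1)) * q ^ j + q ^ (s - 1 + j)
        ≡ ((q ^ s - 1) - q ^ ((s - 1 + j) % s)) + q ^ ((s - 1 + j) % s)
          [MOD q ^ s - 1] := by
      have heq1 : ((q ^ s - 1) - q ^ (s-1)) * q ^ j + q ^ (s - 1 + j)
          = (q ^ s - 1) * q ^ j := by
        rw [pow_add, ← add_mul]
        congr 1
        omega
      rw [heq1, show ((q ^ s - 1) - q ^ ((s - 1 + j) % s)) + q ^ ((s - 1 + j) % s)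
          = q ^ s - 1 by omega]
      show (q ^ s - 1) * q ^ j % (q ^ s - 1) = (q ^ s - 1) % (q ^ s - 1)
      simp [Nat.mul_mod_right, Nat.mod_self]
    have e2 : q ^ (s - 1 + j) ≡ q ^ ((s - 1 + j) % s) [MOD q ^ s - 1] :=
      powmod s (s - 1 + j) (by omega)
    have e3 : ((q ^ s - 1) - q ^ (s-1)) * q ^ j
        ≡ (q ^ s - 1) - q ^ ((s - 1 + j) % s) [MOD q ^ s - 1] :=
      Nat.ModEq.add_right_cancel e2 e1
    have e4 : ((q ^ s - 1) - q ^ (s-1)) * q ^ j % (q ^ s - 1)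
        = (q ^ s - 1) - q ^ ((s - 1 + j) % s) := by
      calc ((q ^ s - 1) - q ^ (s-1)) * q ^ j % (q ^ s - 1)
          = ((q ^ s - 1) - q ^ ((s - 1 + j) % s)) % (q ^ s - 1) := e3
      _ = (q ^ s - 1) - q ^ ((s - 1 + j) % s) := Nat.mod_eq_of_lt (by omega)
    rw [mul_assoc, Nat.mul_mod_mul_left, e4]
    exact Nat.mul_le_mul_left t (by omega)
  · -- part 3
    intro δ hδ1 hδ2
    rw [hδeq] at hδ1
    rw [hdivn] at hδ2 ⊢
    -- E := (q+1)*(n - δ), D := (q+1)*δ, E + D = N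
    have hED : (q+1) * (t * (q ^ s - 1) - δ) + (q+1) * δ = q ^ (2*s) - 1 := by
      rw [← Nat.mul_add, show (t * (q ^ s - 1) - δ) + δ = t * (q ^ s - 1) by omega]
      exact hNfact.symm
    have hDlb : (q+1) * (t * (q ^ s - q ^ (s-1) - 1)) + (q + 1) ≤ (q+1) * δ := by
      have h' : (q+1) * (t * (q ^ s - q ^ (s-1) - 1) + 1) ≤ (q+1) * δ :=
        Nat.mul_le_mul_left _ (by omega)
      rw [Nat.mul_add, Nat.mul_one] at h'
      exact h'
    have hEbound : (q+1) * (t * (q ^ s - 1) - δ) < q ^ (2*s - 1) + q ^ (s-1) := by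
      omega
    have hEpos : 0 < (q+1) * (t * (q ^ s - 1) - δ) :=
      Nat.mul_pos (by omega) (by omega)
    obtain ⟨j, W, hjW, hWgt, hWlt⟩ :
        ∃ j W, ((q+1) * (t * (q ^ s - 1) - δ)) * q ^ j % (q ^ (2*s) - 1) = W ∧
          (q+1) * (t * (q ^ s - 1) - δ) < W ∧ W < q ^ (2*s) - 1 := by
      set E := (q+1) * (t * (q ^ s - 1) - δ) with hEdef
      by_cases hcase : E < q ^ (2*s - 1)
      · -- leading digit of E to the top
        have hk1 : q ^ Nat.log q E ≤ E := Nat.pow_log_le_self q (by omega)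
        have hk2 : E < q ^ (Nat.log q E + 1) := Nat.lt_pow_succ_log_self hq1 E
        set k := Nat.log q E with hkdef
        have hkm : k + 1 ≤ 2*s - 1 := by
          by_contra h
          push_neg at h
          have : q ^ (2*s - 1) ≤ q ^ k := Nat.pow_le_pow_right (by omega) (by omega)
          omega
        have hlt2 : E * q ^ (2*s - 1 - k) < q ^ (k+1) * q ^ (2*s - 1 - k) :=
          mul_lt_mul_of_pos_right hk2 (pow_pos (by omega) _)
        have heq2 : q ^ (k+1) * q ^ (2*s - 1 - k) = q ^ (2*s) := by
          rw [← pow_add]; congr 1; omega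
        have hge2 : q ^ (2*s - 1) ≤ E * q ^ (2*s - 1 - k) := by
          calc q ^ (2*s - 1) = q ^ k * q ^ (2*s - 1 - k) := by
                rw [← pow_add]; congr 1; omega
          _ ≤ E * q ^ (2*s - 1 - k) := Nat.mul_le_mul_right _ hk1
        have hne : E * q ^ (2*s - 1 - k) ≠ q ^ (2*s) - 1 := by
          intro h
          have hd1 : q ∣ q ^ (2*s) - 1 := by
            rw [← h, show 2*s - 1 - k = (2*s - 2 - k) + 1 by omega, pow_succ,
              ← mul_assoc]
            exact dvd_mul_left q _
          have hd2 : q ∣ q ^ (2*s) := dvd_pow_self q (by omega)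
          have hd3 : q ∣ q ^ (2*s) - (q ^ (2*s) - 1) := Nat.dvd_sub hd2 hd1
          rw [show q ^ (2*s) - (q ^ (2*s) - 1) = 1 by omega] at hd3
          have := Nat.le_of_dvd one_pos hd3
          omega
        refine ⟨2*s - 1 - k, E * q ^ (2*s - 1 - k), Nat.mod_eq_of_lt (by omega), ?_, by omega⟩
        omega
      · -- E = q^(2s-1) + r
        push_neg at hcase
        have hrlt : E - q ^ (2*s - 1) < q ^ (s-1) := by omega
        rcases Nat.eq_zero_or_pos (E - q ^ (2*s - 1)) with hr0 | hrpos
        · -- impossible: q+1 divides q^(2s-1)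
          exfalso
          have hEq : E = q ^ (2*s - 1) := by omega
          have hdvdE : (q+1) ∣ E := Dvd.intro _ rfl
          rw [hEq] at hdvdE
          have hco : Nat.Coprime (q+1) q := by
            have : Nat.gcd (q+1) q = Nat.gcd 1 q := by
              rw [Nat.add_comm, Nat.gcd_add_self_left]
            simpa [Nat.Coprime] using this
          have := (hco.pow_right (2*s - 1)).eq_one_of_dvd hdvdE
          omega
        · set r := E - q ^ (2*s - 1) with hrdef
          have hk1 : q ^ Nat.log q r ≤ r := Nat.pow_log_le_self q (by omega)
          have hk2 : r < q ^ (Nat.log q r + 1) := Nat.lt_pow_succ_log_self hq1 r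
          set k := Nat.log q r with hkdef
          have hks : k + 1 ≤ s - 1 := by
            by_contra h
            push_neg at h
            have : q ^ (s-1) ≤ q ^ k := Nat.pow_le_pow_right (by omega) (by omega)
            omega
          -- j = 2s-1-k, W = q^(2s-2-k) + r * q^(2s-1-k)
          have e0 : E = q ^ (2*s - 1) + r := by omega
          have e1 : E * q ^ (2*s - 1 - k)
              = q ^ (2*s) * q ^ (2*s - 2 - k) + r * q ^ (2*s - 1 - k) := by
            rw [e0, add_mul]
            congr 1
            rw [← pow_add, ← pow_add]
            congr 1
            omega
          have e2 : E * q ^ (2*s - 1 - k)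
              ≡ q ^ (2*s - 2 - k) + r * q ^ (2*s - 1 - k) [MOD q ^ (2*s) - 1] := by
            rw [e1]
            have := ((hmod1 (2*s) (by omega)).mul_right (q ^ (2*s - 2 - k))).add_right
              (r * q ^ (2*s - 1 - k))
            simpa using this
          -- bounds
          have f1 : r * q ^ (2*s - 1 - k) ≤ (q ^ (k+1) - 1) * q ^ (2*s - 1 - k) :=
            Nat.mul_le_mul_right _ (by omega)
          have f2 : (q ^ (k+1) - 1) * q ^ (2*s - 1 - k) = q ^ (2*s) - q ^ (2*s - 1 - k) := by
            rw [Nat.sub_mul, one_mul, ← pow_add]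
            congr 2
            omega
          have f3 : 2 * q ^ (2*s - 2 - k) ≤ q ^ (2*s - 1 - k) := by
            have hh : q ^ (2*s - 1 - k) = q ^ (2*s - 2 - k) * q := by
              rw [← pow_succ]; congr 1; omega
            rw [hh]
            calc 2 * q ^ (2*s - 2 - k) = q ^ (2*s - 2 - k) * 2 := Nat.mul_comm _ _
            _ ≤ q ^ (2*s - 2 - k) * q := Nat.mul_le_mul_left _ hq2
          have f4 : q ^ (s-1) < q ^ (2*s - 2 - k) := Nat.pow_lt_pow_right hq1 (by omega)
          have f5 : q ^ (2*s - 1) = q ^ k * q ^ (2*s - 1 - k) := by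
            rw [← pow_add]; congr 1; omega
          have f6 : q ^ k * q ^ (2*s - 1 - k) ≤ r * q ^ (2*s - 1 - k) :=
            Nat.mul_le_mul_right _ hk1
          have hVlt : q ^ (2*s - 2 - k) + r * q ^ (2*s - 1 - k) < q ^ (2*s) - 1 := by
            omega
          refine ⟨2*s - 1 - k, q ^ (2*s - 2 - k) + r * q ^ (2*s - 1 - k), ?_, by omega, hVlt⟩
          calc E * q ^ (2*s - 1 - k) % (q ^ (2*s) - 1)
              = (q ^ (2*s - 2 - k) + r * q ^ (2*s - 1 - k)) % (q ^ (2*s) - 1) := e2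
          _ = q ^ (2*s - 2 - k) + r * q ^ (2*s - 1 - k) := Nat.mod_eq_of_lt hVlt
    -- conclude
    have h2' : (((q+1) * δ) * q ^ j % (q ^ (2*s) - 1) + W) % (q ^ (2*s) - 1) = 0 := by
      conv_lhs => rw [← hjW]
      rw [← Nat.add_mod, ← add_mul, show (q+1) * δ + (q+1) * (t * (q ^ s - 1) - δ)
        = q ^ (2*s) - 1 by omega]
      exact Nat.mul_mod_right _ _
    have hXlt : ((q+1) * δ) * q ^ j % (q ^ (2*s) - 1) < q ^ (2*s) - 1 :=
      Nat.mod_lt _ (by omega)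
    have hXW : ((q+1) * δ) * q ^ j % (q ^ (2*s) - 1) + W = q ^ (2*s) - 1 :=
      Nat.eq_of_dvd_of_lt_two_mul (by omega) (Nat.dvd_of_mod_eq_zero h2') (by omega)
    have hfin : (q+1) * (δ * q ^ j % (t * (q ^ s - 1))) = (q ^ (2*s) - 1) - W := by
      rw [← Nat.mul_mod_mul_left, ← mul_assoc, hNfact.symm]
      omega
    refine ⟨j, ?_⟩
    have hlt' : (q+1) * (δ * q ^ j % (t * (q ^ s - 1))) < (q+1) * δ := by omega
    exact Nat.lt_of_mul_lt_mul_left hlt'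
end

section
/- Let q be a prime power and m ≥ 2 an integer. The largest q-cyclotomic coset leader modulo q^m - 1 is (q-1)·q^(m-1) - 1. -/
private lemma mod_eq_of_zmod {n a b : ℕ} (hn : 0 < n) (hb : b < n)
    (h : ((a : ℕ) : ZMod n) = ((b : ℕ) : ZMod n)) : a % n = b := by
  haveI : NeZero n := ⟨hn.ne'⟩
  have h2 := congrArg ZMod.val h
  rwa [ZMod.val_natCast, ZMod.val_natCast, Nat.mod_eq_of_lt hb] at h2

theorem stmt_3 (q m : ℕ) (hq : IsPrimePow q) (hm : 2 ≤ m) :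
    (∀ j : ℕ,
        (q - 1) * q ^ (m - 1) - 1 ≤ (((q - 1) * q ^ (m - 1) - 1) * q ^ j) % (q ^ m - 1)) ∧
    (∀ δ : ℕ, (q - 1) * q ^ (m - 1) - 1 < δ → δ < q ^ m - 1 →
        ∃ j : ℕ, (δ * q ^ j) % (q ^ m - 1) < δ) := by
  have hq2 : 2 ≤ q := hq.two_le
  set A := q ^ (m - 1) with hA
  set n := q ^ m - 1 with hn
  have hqA : q ^ m = A * q := by
    rw [hA, ← pow_succ]
    congr 1
    omega
  have hA2 : 2 ≤ A := by
    calc 2 ≤ q := hq2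
    _ = q ^ 1 := (pow_one q).symm
    _ ≤ q ^ (m - 1) := Nat.pow_le_pow_right (by omega) (by omega)
  have h2A : 2 * A ≤ A * q := by
    calc 2 * A = A * 2 := by ring
    _ ≤ A * q := Nat.mul_le_mul_left A hq2
  have hAn : A + 1 ≤ n := by omega
  have hn0 : 0 < n := by omega
  haveI : NeZero n := ⟨hn0.ne'⟩
  have hδ0 : (q - 1) * A - 1 = n - A := by
    have : (q - 1) * A = A * q - A := by
      rw [Nat.sub_mul, one_mul, Nat.mul_comm]
    omega
  -- q^m = 1 in ZMod n
  have hq1 : ((q : ZMod n)) ^ m = 1 := by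
    have h1 : ((q ^ m : ℕ) : ZMod n) = ((n + 1 : ℕ) : ZMod n) := by
      congr 1
      omega
    push_cast at h1
    rw [ZMod.natCast_self] at h1
    simpa using h1
  have hpow : ∀ k : ℕ, ((q : ZMod n)) ^ k = (q : ZMod n) ^ (k % m) := by
    intro k
    conv_lhs => rw [← Nat.div_add_mod k m]
    rw [pow_add, pow_mul, hq1, one_pow, one_mul]
  constructor
  · intro j
    set r := (m - 1 + j) % m with hr
    have hrm : r < m := Nat.mod_lt _ (by omega)
    have hqr : q ^ r ≤ A := Nat.pow_le_pow_right (by omega) (by omega)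
    have hqr1 : 1 ≤ q ^ r := Nat.one_le_pow _ _ (by omega)
    have key : (((q - 1) * A - 1) * q ^ j) % n = n - q ^ r := by
      apply mod_eq_of_zmod hn0 (by omega)
      rw [hδ0]
      rw [Nat.cast_mul, Nat.cast_sub (by omega : A ≤ n), Nat.cast_sub (le_trans hqr (by omega)),
        ZMod.natCast_self]
      rw [zero_sub, zero_sub, hA]
      push_cast
      rw [neg_mul, ← pow_add, hpow (m - 1 + j), ← hr]
    rw [key]
    omega
  · intro δ hδ1 hδ2
    rw [hδ0] at hδ1
    set t := n - δ with ht
    have ht1 : 1 ≤ t := by omega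
    have htA : t < A := by omega
    have htq : t * q < n := by
      have : t * q ≤ (A - 1) * q := Nat.mul_le_mul_right q (by omega)
      have h2 : (A - 1) * q = A * q - q := by rw [Nat.sub_mul, one_mul]
      omega
    have httq : t < t * q := by nlinarith
    refine ⟨1, ?_⟩
    have key : (δ * q ^ 1) % n = n - t * q := by
      apply mod_eq_of_zmod hn0 (by omega)
      have hδeq : δ = n - t := by omega
      rw [hδeq, pow_one, Nat.cast_mul, Nat.cast_sub (by omega : t ≤ n),
        Nat.cast_sub (by omega : t * q ≤ n), ZMod.natCast_self]
      push_cast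
      ring
    rw [key]
    omega
end

section
/- Let q be a prime power and m ≥ 3 an integer. The second largest q-cyclotomic coset leader modulo q^m - 1 is (q-1)·q^(m-1) - q^⌊(m-1)/2⌋ - 1; that is, it is a coset leader, and every coset leader strictly between it and (q-1)·q^(m-1) - 1 does not exist. -/
private lemma ple {q : ℕ} (hq : 2 ≤ q) {a b : ℕ} (h : a ≤ b) : q ^ a ≤ q ^ b :=
  Nat.pow_le_pow_right (by omega) h

private lemma plt {q : ℕ} (hq : 2 ≤ q) {a b : ℕ} (h : a < b) : q ^ a < q ^ b :=
  Nat.pow_lt_pow_right (by omega) h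

private lemma pmul (q a b c : ℕ) (h : a + b = c) : q ^ a * q ^ b = q ^ c := by
  rw [← pow_add, h]

private lemma pdouble {q : ℕ} (hq : 2 ≤ q) {a b : ℕ} (h : a + 1 = b) :
    2 * q ^ a ≤ q ^ b := by
  subst h
  rw [pow_succ]
  calc 2 * q ^ a = q ^ a * 2 := by ring
    _ ≤ q ^ a * q := Nat.mul_le_mul_left _ hq

private lemma moddiv {b r : ℕ} (A : ℕ) (hb : 0 < b) (hr : r < b) :
    (r + A * b) % b = r ∧ (r + A * b) / b = A := by
  constructor
  · rw [Nat.add_mul_mod_self_right, Nat.mod_eq_of_lt hr]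
  · rw [Nat.add_mul_div_right _ _ hb, Nat.div_eq_of_lt hr, zero_add]

private lemma rot_eq (q m j δ : ℕ) (hq : 2 ≤ q) (hj : j ≤ m) (hδ : δ < q ^ m - 1) :
    (δ * q ^ j) % (q ^ m - 1) = (δ % q ^ (m - j)) * q ^ j + δ / q ^ (m - j) := by
  have hq0 : 0 < q := by omega
  obtain ⟨a, ha⟩ : ∃ x, x = δ / q ^ (m - j) := ⟨_, rfl⟩
  obtain ⟨r, hr⟩ : ∃ x, x = δ % q ^ (m - j) := ⟨_, rfl⟩
  rw [← ha, ← hr]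
  have hδeq : q ^ (m - j) * a + r = δ := by
    rw [ha, hr]; exact Nat.div_add_mod δ (q ^ (m - j))
  have hrlt : r < q ^ (m - j) := by
    rw [hr]; exact Nat.mod_lt _ (pow_pos hq0 _)
  clear ha hr
  have hqm : q ^ (m - j) * q ^ j = q ^ m := pmul q _ _ _ (by omega)
  have hn1 : 1 ≤ q ^ m := Nat.one_le_pow _ _ hq0
  have h3 : δ * q ^ j = r * q ^ j + a * q ^ m := by
    rw [← hδeq, ← hqm]; ring
  have halt : a < q ^ j := by
    rcases Nat.lt_or_ge a (q ^ j) with h | h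
    · exact h
    · exfalso
      have h5 : q ^ (m - j) * q ^ j ≤ q ^ (m - j) * a := Nat.mul_le_mul_left _ h
      omega
  have key : δ * q ^ j = (r * q ^ j + a) + a * (q ^ m - 1) := by
    calc δ * q ^ j = r * q ^ j + a * q ^ m := h3
      _ = r * q ^ j + a * ((q ^ m - 1) + 1) := by rw [Nat.sub_add_cancel hn1]
      _ = (r * q ^ j + a) + a * (q ^ m - 1) := by ring
  rw [key, Nat.add_mul_mod_self_right]
  apply Nat.mod_eq_of_lt
  have hd : 1 ≤ q ^ j := Nat.one_le_pow _ _ hq0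
  rcases Nat.lt_or_ge (r + 1) (q ^ (m - j)) with hcase | hcase
  · have h6 : (r + 2) * q ^ j ≤ q ^ (m - j) * q ^ j := Nat.mul_le_mul_right _ (by omega)
    have h7 : (r + 2) * q ^ j = r * q ^ j + 2 * q ^ j := by ring
    omega
  · have hre : r = q ^ (m - j) - 1 := by omega
    have hmul : q ^ (m - j) * (a + 1) < q ^ (m - j) * q ^ j := by
      have he : q ^ (m - j) * (a + 1) = q ^ (m - j) * a + q ^ (m - j) := by ring
      omega
    have ha2 : a + 1 < q ^ j := Nat.lt_of_mul_lt_mul_left hmul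
    have h6 : (r + 1) * q ^ j = q ^ m := by
      rw [show r + 1 = q ^ (m - j) from by omega, hqm]
    have h7 : (r + 1) * q ^ j = r * q ^ j + q ^ j := by ring
    omega

private lemma period_eq (q m j δ : ℕ) (hq : 2 ≤ q) (_hm : 1 ≤ m) :
    (δ * q ^ j) % (q ^ m - 1) = (δ * q ^ (j % m)) % (q ^ m - 1) := by
  have hn1 : 1 ≤ q ^ m := Nat.one_le_pow _ _ (by omega)
  have hmod : q ^ m ≡ 1 [MOD q ^ m - 1] :=
    ((Nat.modEq_iff_dvd' hn1).mpr dvd_rfl).symm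
  have h2 : q ^ j ≡ q ^ (j % m) [MOD q ^ m - 1] := by
    conv_lhs => rw [show j = m * (j / m) + j % m from (Nat.div_add_mod j m).symm]
    rw [pow_add, pow_mul]
    calc (q ^ m) ^ (j / m) * q ^ (j % m)
        ≡ 1 ^ (j / m) * q ^ (j % m) [MOD q ^ m - 1] := (hmod.pow _).mul_right _
      _ = q ^ (j % m) := by rw [one_pow, one_mul]
  exact h2.mul_left δ

theorem stmt_4 (q m : ℕ) (hq : IsPrimePow q) (hm : 3 ≤ m) :
    (∀ j : ℕ,
        (q - 1) * q ^ (m - 1) - q ^ ((m - 1) / 2) - 1 ≤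
          (((q - 1) * q ^ (m - 1) - q ^ ((m - 1) / 2) - 1) * q ^ j) % (q ^ m - 1)) ∧
    (∀ δ : ℕ, (q - 1) * q ^ (m - 1) - q ^ ((m - 1) / 2) - 1 < δ →
        δ < (q - 1) * q ^ (m - 1) - 1 →
        ∃ j : ℕ, (δ * q ^ j) % (q ^ m - 1) < δ) := by
  have hq2 : 2 ≤ q := hq.two_le
  set t := (m - 1) / 2 with htdef
  have ht1 : 1 ≤ t := by omega
  have ht2 : 2 * t ≤ m - 1 := by omega
  have ht3 : m - 2 ≤ 2 * t := by omega
  have htm2 : t ≤ m - 2 := by omega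
  have hsub : (q - 1) * q ^ (m - 1) = q ^ m - q ^ (m - 1) := by
    have h : q * q ^ (m - 1) = q ^ m := by
      rw [← pow_succ', show m - 1 + 1 = m from by omega]
    rw [Nat.sub_mul, one_mul, h]
  -- global power facts
  have c1 : q ^ t ≤ q ^ (m - 2) := ple hq2 (by omega)
  have c2 : 2 * q ^ (m - 2) ≤ q ^ (m - 1) := pdouble hq2 (by omega)
  have c3 : 2 * q ^ (m - 1) ≤ q ^ m := pdouble hq2 (by omega)
  have c4 : 1 ≤ q ^ t := Nat.one_le_pow _ _ (by omega)
  have c5 : 1 ≤ q ^ (m - 2) := Nat.one_le_pow _ _ (by omega)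
  have hδ₂lt : (q - 1) * q ^ (m - 1) - q ^ t - 1 < q ^ m - 1 := by
    rw [hsub]; omega
  constructor
  · -- part 1
    intro j
    rw [period_eq q m j _ hq2 (by omega)]
    by_cases hj0 : j % m = 0
    · rw [hj0, pow_zero, mul_one, Nat.mod_eq_of_lt hδ₂lt]
    · have hj'm : j % m < m := Nat.mod_lt _ (by omega)
      rw [rot_eq q m (j % m) _ hq2 (by omega) hδ₂lt]
      set j' := j % m with hj'def
      have h1j : 1 ≤ j' := by omega
      by_cases hkt : t < m - j'
      · -- k = m - j' > t
        have hA : (q ^ j' - q ^ (j' - 1) - 1) * q ^ (m - j')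
            = q ^ m - q ^ (m - 1) - q ^ (m - j') := by
          rw [Nat.sub_mul, Nat.sub_mul, one_mul, pmul q j' (m - j') m (by omega),
            pmul q (j' - 1) (m - j') (m - 1) (by omega)]
        have d1 : q ^ t < q ^ (m - j') := plt hq2 hkt
        have d2 : q ^ (m - j') ≤ q ^ (m - 1) := ple hq2 (by omega)
        have hdecomp : (q - 1) * q ^ (m - 1) - q ^ t - 1
            = (q ^ (m - j') - q ^ t - 1) + (q ^ j' - q ^ (j' - 1) - 1) * q ^ (m - j') := by
          rw [hsub, hA]; omega
        have hrlt : q ^ (m - j') - q ^ t - 1 < q ^ (m - j') := by omega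
        rw [hdecomp, (moddiv _ (by omega) hrlt).1, (moddiv _ (by omega) hrlt).2]
        have hrq : (q ^ (m - j') - q ^ t - 1) * q ^ j'
            = q ^ m - q ^ (t + j') - q ^ j' := by
          rw [Nat.sub_mul, Nat.sub_mul, one_mul, pmul q (m - j') j' m (by omega),
            pmul q t j' (t + j') rfl]
        rw [hrq]
        have f1 : q ^ (t + j') ≤ q ^ (m - 1) := ple hq2 (by omega)
        have f2 : q ^ (j' - 1) ≤ q ^ t := ple hq2 (by omega)
        have f3 : q ^ j' ≤ q ^ (t + j') := ple hq2 (by omega)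
        have f4 : 1 ≤ q ^ (j' - 1) := Nat.one_le_pow _ _ (by omega)
        have f5 : 2 * q ^ (j' - 1) ≤ q ^ j' := pdouble hq2 (by omega)
        omega
      · -- k = m - j' ≤ t
        have hA : (q ^ j' - q ^ (j' - 1) - q ^ (t + j' - m) - 1) * q ^ (m - j')
            = q ^ m - q ^ (m - 1) - q ^ t - q ^ (m - j') := by
          rw [Nat.sub_mul, Nat.sub_mul, Nat.sub_mul, one_mul,
            pmul q j' (m - j') m (by omega),
            pmul q (j' - 1) (m - j') (m - 1) (by omega),
            pmul q (t + j' - m) (m - j') t (by omega)]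
        have d1 : q ^ (m - j') ≤ q ^ t := ple hq2 (by omega)
        have d2 : 1 ≤ q ^ (m - j') := Nat.one_le_pow _ _ (by omega)
        have hdecomp : (q - 1) * q ^ (m - 1) - q ^ t - 1
            = (q ^ (m - j') - 1)
              + (q ^ j' - q ^ (j' - 1) - q ^ (t + j' - m) - 1) * q ^ (m - j') := by
          rw [hsub, hA]; omega
        have hrlt : q ^ (m - j') - 1 < q ^ (m - j') := by omega
        rw [hdecomp, (moddiv _ (by omega) hrlt).1, (moddiv _ (by omega) hrlt).2]
        have hrq : (q ^ (m - j') - 1) * q ^ j' = q ^ m - q ^ j' := by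
          rw [Nat.sub_mul, one_mul, pmul q (m - j') j' m (by omega)]
        rw [hrq]
        have f1 : q ^ j' ≤ q ^ (m - 1) := ple hq2 (by omega)
        have f2 : q ^ (j' - 1) ≤ q ^ (m - 2) := ple hq2 (by omega)
        have f3 : q ^ (t + j' - m) ≤ q ^ (j' - 1) := ple hq2 (by omega)
        have f4 : q ^ (t + j' - m) ≤ q ^ t := ple hq2 (by omega)
        have f5 : 1 ≤ q ^ (t + j' - m) := Nat.one_le_pow _ _ (by omega)
        have f6 : 2 * q ^ (j' - 1) ≤ q ^ j' := pdouble hq2 (by omega)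
        omega
  · -- part 2
    intro δ hδ₂ hδ₁
    rw [hsub] at hδ₂ hδ₁
    set s := q ^ m - q ^ (m - 1) - 1 - δ with hsdef
    have hs1 : 1 ≤ s := by omega
    have hs2 : s < q ^ t := by omega
    set i := Nat.log q s with hidef
    have hi1 : q ^ i ≤ s := Nat.pow_log_le_self q (by omega)
    have hi2 : s < q ^ (i + 1) := Nat.lt_pow_succ_log_self (by omega) s
    have hit : i < t := by
      by_contra h
      push_neg at h
      have : q ^ t ≤ q ^ i := ple hq2 h
      omega
    refine ⟨m - 1 - i, ?_⟩
    have hδlt' : δ < q ^ m - 1 := by omega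
    rw [rot_eq q m (m - 1 - i) δ hq2 (by omega) hδlt',
      show m - (m - 1 - i) = i + 1 from by omega]
    have g1 : q ^ (i + 1) ≤ q ^ (m - 2) := ple hq2 (by omega)
    have g2 : 1 ≤ q ^ (i + 1) := Nat.one_le_pow _ _ (by omega)
    have hA : (q ^ (m - 1 - i) - q ^ (m - 2 - i) - 1) * q ^ (i + 1)
        = q ^ m - q ^ (m - 1) - q ^ (i + 1) := by
      rw [Nat.sub_mul, Nat.sub_mul, one_mul, pmul q (m - 1 - i) (i + 1) m (by omega),
        pmul q (m - 2 - i) (i + 1) (m - 1) (by omega)]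
    have hdecomp : δ = (q ^ (i + 1) - 1 - s)
        + (q ^ (m - 1 - i) - q ^ (m - 2 - i) - 1) * q ^ (i + 1) := by
      rw [hA]; omega
    have hrlt : q ^ (i + 1) - 1 - s < q ^ (i + 1) := by omega
    rw [hdecomp, (moddiv _ (by omega) hrlt).1, (moddiv _ (by omega) hrlt).2]
    have hrq : (q ^ (i + 1) - 1 - s) * q ^ (m - 1 - i)
        = q ^ m - q ^ (m - 1 - i) - s * q ^ (m - 1 - i) := by
      rw [Nat.sub_mul, Nat.sub_mul, one_mul, pmul q (i + 1) (m - 1 - i) m (by omega)]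
    rw [hrq]
    have f1 : q ^ (m - 1) ≤ s * q ^ (m - 1 - i) := by
      calc q ^ (m - 1) = q ^ i * q ^ (m - 1 - i) := (pmul q i (m - 1 - i) (m - 1) (by omega)).symm
        _ ≤ s * q ^ (m - 1 - i) := Nat.mul_le_mul_right _ hi1
    have f2 : s * q ^ (m - 1 - i) + q ^ (m - 1 - i) ≤ q ^ m := by
      have h' : (s + 1) * q ^ (m - 1 - i) ≤ q ^ (i + 1) * q ^ (m - 1 - i) :=
        Nat.mul_le_mul_right _ (by omega)
      have he : (s + 1) * q ^ (m - 1 - i) = s * q ^ (m - 1 - i) + q ^ (m - 1 - i) := by ring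
      have he2 : q ^ (i + 1) * q ^ (m - 1 - i) = q ^ m := pmul q (i + 1) (m - 1 - i) m (by omega)
      omega
    have f3 : s < q ^ (m - 2 - i) := lt_of_lt_of_le hi2 (ple hq2 (by omega))
    have f4 : q ^ (m - 2 - i) < q ^ (m - 1 - i) := plt hq2 (by omega)
    omega
end

section
/- Let q be a prime power, m ≥ 4 even, n = (q^m - 1)/(q+1), and t an even integer with 2 ≤ t < m. Then (q^t - 1)/(q+1) is a q-cyclotomic coset leader modulo n. -/
theorem stmt_6 (q m t : ℕ) (hq : IsPrimePow q) (hm : 4 ≤ m) (hme : Even m)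
    (ht : Even t) (ht2 : 2 ≤ t) (htm : t < m) :
    ∀ j : ℕ,
      (q ^ t - 1) / (q + 1) ≤
        ((q ^ t - 1) / (q + 1) * q ^ j) % ((q ^ m - 1) / (q + 1)) := by
  have hq2 : 2 ≤ q := hq.two_le
  have hdvd : ∀ s : ℕ, Even s → (q + 1) ∣ q ^ s - 1 := by
    rintro s ⟨c, rfl⟩
    have h1 : q + 1 ∣ q ^ 2 - 1 := by
      refine ⟨q - 1, ?_⟩
      have h1q : 1 ≤ q := by omega
      have h1q2 : 1 ≤ q ^ 2 := Nat.one_le_pow _ _ (by omega)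
      zify [h1q, h1q2]; ring
    have h2 : q ^ 2 - 1 ∣ (q ^ 2) ^ c - 1 := by
      simpa using Nat.sub_dvd_pow_sub_pow (q ^ 2) 1 c
    have h3 : (q ^ 2) ^ c = q ^ (c + c) := by
      rw [← pow_mul, two_mul]
    exact h3 ▸ h1.trans h2
  set δ := (q ^ t - 1) / (q + 1) with hδdef
  set n := (q ^ m - 1) / (q + 1) with hndef
  have hδ : δ * (q + 1) = q ^ t - 1 := Nat.div_mul_cancel (hdvd t ht)
  have hn : n * (q + 1) = q ^ m - 1 := Nat.div_mul_cancel (hdvd m hme)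
  have hqm1 : 1 ≤ q ^ m := Nat.one_le_pow _ _ (by omega)
  have hqm2 : 2 * q ^ (m - 1) ≤ q ^ m := by
    calc 2 * q ^ (m - 1) ≤ q * q ^ (m - 1) := Nat.mul_le_mul_right _ hq2
      _ = q ^ m := by rw [← pow_succ']; congr 1; omega
  have hqm3 : 2 ≤ q ^ (m - 1) := by
    calc 2 ≤ q := hq2
      _ = q ^ 1 := (pow_one q).symm
      _ ≤ q ^ (m - 1) := Nat.pow_le_pow_right (by omega) (by omega)
  have hnpos : 0 < n := by
    rcases Nat.eq_zero_or_pos n with h | h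
    · exfalso
      rw [h, zero_mul] at hn
      omega
    · exact h
  intro j
  have hmod : q ^ j ≡ q ^ (j % m) [MOD n] := by
    have h1 : n ∣ q ^ m - 1 := ⟨q + 1, hn.symm⟩
    have h2 : q ^ m ≡ 1 [MOD n] := ((Nat.modEq_iff_dvd' hqm1).mpr h1).symm
    calc q ^ j = (q ^ m) ^ (j / m) * q ^ (j % m) := by
          rw [← pow_mul, ← pow_add, Nat.div_add_mod]
      _ ≡ 1 ^ (j / m) * q ^ (j % m) [MOD n] := (h2.pow _).mul_right _
      _ = q ^ (j % m) := by rw [one_pow, one_mul]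
  have hgoal : (δ * q ^ j) % n = (δ * q ^ (j % m)) % n := hmod.mul_left δ
  rw [hgoal]
  set j' := j % m with hj'def
  have hj' : j' < m := Nat.mod_lt _ (by omega)
  have hCpos : 1 ≤ q ^ j' := Nat.one_le_pow _ _ (by omega)
  rcases le_or_gt (t + j') m with hle | hgt
  · -- case 1 : t + j' ≤ m
    have hself : δ * q ^ j' < n := by
      have hmul : δ * q ^ j' * (q + 1) = q ^ (t + j') - q ^ j' := by
        rw [mul_right_comm, hδ, Nat.sub_mul, one_mul, ← pow_add]
      have hlt : q ^ (t + j') - q ^ j' < q ^ m - 1 := by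
        rcases eq_or_lt_of_le hle with he | hlt
        · have hj1 : 1 ≤ j' := by omega
          have h2j : 2 ≤ q ^ j' := by
            calc 2 ≤ q := hq2
              _ = q ^ 1 := (pow_one q).symm
              _ ≤ q ^ j' := Nat.pow_le_pow_right (by omega) hj1
          rw [he]
          omega
        · have h1 : q ^ (t + j') ≤ q ^ (m - 1) :=
            Nat.pow_le_pow_right (by omega) (by omega)
          omega
      refine lt_of_mul_lt_mul_right ?_ (Nat.zero_le (q + 1))
      rw [hmul, hn]
      exact hlt
    rw [Nat.mod_eq_of_lt hself]
    exact Nat.le_mul_of_pos_right _ (by omega)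
  · -- case 2 : m < t + j'
    set r := t + j' - m with hrdef
    have htj : t + j' = m + r := by omega
    have hr1 : 1 ≤ r := by omega
    have hrj : r < j' := by omega
    have hCR : q ^ r < q ^ j' := Nat.pow_lt_pow_right (by omega) hrj
    have hdvd2 : (q + 1) ∣ q ^ j' - q ^ r := by
      have heven : Even (j' - r) := by
        have hh : j' - r = m - t := by omega
        rw [hh]
        exact (Nat.even_sub htm.le).mpr (iff_of_true hme ht)
      have h1 : (q + 1) ∣ q ^ (j' - r) - 1 := hdvd _ heven
      have h2 : q ^ j' - q ^ r = q ^ r * (q ^ (j' - r) - 1) := by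
        rw [Nat.mul_sub, mul_one, ← pow_add]
        congr 2
        omega
      rw [h2]
      exact Dvd.dvd.mul_left h1 _
    set e := (q ^ j' - q ^ r) / (q + 1) with hedef
    have he : e * (q + 1) = q ^ j' - q ^ r := Nat.div_mul_cancel hdvd2
    have hA1 : 1 ≤ q ^ t := Nat.one_le_pow _ _ (by omega)
    have key : δ * q ^ j' + e = q ^ r * n := by
      have hd0 : ((q : ℤ) + 1) ≠ 0 := by positivity
      have h1 : (δ : ℤ) * (q + 1) = (q : ℤ) ^ t - 1 := by
        have h := hδ; zify [hA1] at h; linarith [h]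
      have h2 : (e : ℤ) * (q + 1) = (q : ℤ) ^ j' - q ^ r := by
        have h := he; zify [hCR.le] at h; linarith [h]
      have h3 : (n : ℤ) * (q + 1) = (q : ℤ) ^ m - 1 := by
        have h := hn; zify [hqm1] at h; linarith [h]
      have h4 : (q : ℤ) ^ t * q ^ j' = (q : ℤ) ^ m * q ^ r := by
        rw [← pow_add, ← pow_add, htj]
      have h5 : ((δ : ℤ) * q ^ j' + e) * (q + 1) = (q : ℤ) ^ r * n * (q + 1) := by
        linear_combination (q : ℤ) ^ j' * h1 + h2 - (q : ℤ) ^ r * h3 + h4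
      have h6 := mul_right_cancel₀ hd0 h5
      exact_mod_cast h6
    have hC : q ^ j' ≤ q ^ (m - 1) := Nat.pow_le_pow_right (by omega) (by omega)
    have hA : q ^ t ≤ q ^ (m - 1) := Nat.pow_le_pow_right (by omega) (by omega)
    have he1 : 1 ≤ e := by
      rcases Nat.eq_zero_or_pos e with h | h
      · exfalso; rw [h, zero_mul] at he; omega
      · exact h
    have hen : e < n := by
      refine lt_of_mul_lt_mul_right ?_ (Nat.zero_le (q + 1))
      rw [he, hn]
      omega
    have hR1 : 1 ≤ q ^ r := Nat.one_le_pow _ _ (by omega)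
    have key2 : δ * q ^ j' = n * (q ^ r - 1) + (n - e) := by
      have h1 : q ^ r * n = n * (q ^ r - 1) + n := by
        conv_lhs => rw [show q ^ r = q ^ r - 1 + 1 from by omega]
        ring
      omega
    rw [key2, Nat.mul_add_mod, Nat.mod_eq_of_lt (by omega : n - e < n)]
    refine Nat.le_of_mul_le_mul_right ?_ (show 0 < q + 1 by omega)
    rw [hδ, Nat.sub_mul, he, hn]
    omega
end

section
/- Let q be a prime power and m ≥ 4 an even integer. Then ((q-2)·(q^m - 1)/(q-1))/(q+1) is a q-cyclotomic coset leader modulo n = (q^m - 1)/(q+1), i.e., (q-2)·(1 + q + ... + q^(m-1))/(q+1) is a coset leader modulo n. -/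
private lemma geomA (q : ℕ) (hq : 1 ≤ q) (m : ℕ) :
    (q - 1) * ∑ i ∈ Finset.range m, q ^ i = q ^ m - 1 := by
  induction m with
  | zero => simp
  | succ m ih =>
    rw [Finset.sum_range_succ, mul_add] at *
    have h1 : 1 ≤ q ^ m := Nat.one_le_pow _ _ (by omega)
    have h2 : (q - 1) * q ^ m = q * q ^ m - q ^ m := by
      rw [Nat.sub_one_mul]
    have h3 : q ^ (m + 1) = q * q ^ m := by rw [pow_succ]; ring
    have h4 : q ^ m ≤ q * q ^ m := Nat.le_mul_of_pos_left _ (by omega)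
    omega

private lemma geomB (q t : ℕ) :
    ∑ i ∈ Finset.range (t + t), q ^ i
      = (q + 1) * ∑ k ∈ Finset.range t, (q ^ 2) ^ k := by
  induction t with
  | zero => simp
  | succ t ih =>
    have h : t + 1 + (t + 1) = (t + t) + 1 + 1 := by ring
    rw [h, Finset.sum_range_succ, Finset.sum_range_succ, ih,
      Finset.sum_range_succ]
    have h2 : (q ^ 2) ^ t = q ^ (t + t) := by
      rw [← pow_mul]; ring_nf
    rw [h2]
    ring

private lemma modC (q P : ℕ) (h : 3 ≤ q) (hP : 0 < P) (j : ℕ) :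
    ((q - 2) * P * q ^ j) % ((q - 1) * P) = (q - 2) * P := by
  have hlt : (q - 2) * P < (q - 1) * P :=
    (Nat.mul_lt_mul_right hP).mpr (by omega)
  induction j with
  | zero => simpa using Nat.mod_eq_of_lt hlt
  | succ j ih =>
    have key : (q - 2) * P * q = (q - 2) * P + (q - 2) * ((q - 1) * P) := by
      obtain ⟨r, rfl⟩ : ∃ r, q = r + 3 := ⟨q - 3, by omega⟩
      simp only [show r + 3 - 2 = r + 1 from by omega,
        show r + 3 - 1 = r + 2 from by omega]
      ring
    calc ((q - 2) * P * q ^ (j + 1)) % ((q - 1) * P)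
        = ((q - 2) * P * q ^ j * q) % ((q - 1) * P) := by
          rw [pow_succ, ← mul_assoc]
      _ = ((q - 2) * P * q ^ j % ((q - 1) * P)) * (q % ((q - 1) * P))
            % ((q - 1) * P) := by rw [Nat.mul_mod]
      _ = ((q - 2) * P % ((q - 1) * P)) * (q % ((q - 1) * P))
            % ((q - 1) * P) := by rw [ih, Nat.mod_eq_of_lt hlt]
      _ = ((q - 2) * P * q) % ((q - 1) * P) := by rw [← Nat.mul_mod]
      _ = (q - 2) * P := by
          rw [key, Nat.add_mul_mod_self_right, Nat.mod_eq_of_lt hlt]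

theorem stmt_8 (q m : ℕ) (hq : IsPrimePow q) (hm : 4 ≤ m) (hme : Even m) :
    ∀ j : ℕ,
      (q - 2) * (∑ i ∈ Finset.range m, q ^ i) / (q + 1) ≤
        ((q - 2) * (∑ i ∈ Finset.range m, q ^ i) / (q + 1) * q ^ j) %
          ((q ^ m - 1) / (q + 1)) := by
  intro j
  have hq2 : 2 ≤ q := hq.two_le
  rcases eq_or_lt_of_le hq2 with h2 | h3
  · -- q = 2
    rw [← h2]
    simp
  · -- 3 ≤ q
    obtain ⟨t, rfl⟩ := hme
    have hS : ∑ i ∈ Finset.range (t + t), q ^ i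
        = (q + 1) * ∑ k ∈ Finset.range t, (q ^ 2) ^ k := geomB q t
    set P := ∑ k ∈ Finset.range t, (q ^ 2) ^ k with hPdef
    have hP : 0 < P := by
      apply Finset.sum_pos
      · intro i _
        exact pow_pos (pow_pos (by omega) 2) i
      · exact Finset.nonempty_range_iff.mpr (by omega)
    have hδ : (q - 2) * (∑ i ∈ Finset.range (t + t), q ^ i) / (q + 1)
        = (q - 2) * P := by
      rw [hS, show (q - 2) * ((q + 1) * P) = (q + 1) * ((q - 2) * P) by ring,
        Nat.mul_div_cancel_left _ (by omega)]
    have hn : (q ^ (t + t) - 1) / (q + 1) = (q - 1) * P := by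
      rw [← geomA q (by omega) (t + t), hS,
        show (q - 1) * ((q + 1) * P) = (q + 1) * ((q - 1) * P) by ring,
        Nat.mul_div_cancel_left _ (by omega)]
    rw [hδ, hn, modC q P h3 hP j]
end

section
/- Let q be an odd prime power and n = (q^4 - 1)/(q+1). Then ((q-1)·q^3 - q^2 - q - 2)/(q+1) is the second largest q-cyclotomic coset leader modulo n; the largest is ((q-1)·q^3 - q^2 - 1)/(q+1), and there is no coset leader strictly between them. -/
/-!
Put `n = (q - 1)(q² + 1) = (q⁴ - 1)/(q + 1)`; the two candidates are `n - (q² + 1)` and `n - q²`.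
Since `(n - r) q^j ≡ -r q^j (mod n)`, the residue of `(n - r) q^j` is `n` minus that of `r q^j`
(when the latter is nonzero), so `n - r` is a coset leader exactly when no residue `r q^j mod n`
exceeds `r`. Now `q (q² + 1) = n + (q² + 1)`, so `q² + 1` is fixed by `q`;
as `q⁴ ≡ 1 (mod n)`, the orbit of `q²` is `{1, q, q², q² - q + 1}`, with maximum `q²`; and every
`0 < r < q²` is sent above itself by one of `q`, `q²`, `q³`.
-/

namespace CosetLeader

def IsCosetLeader (q n δ : ℕ) : Prop := ∀ j, δ ≤ δ * q ^ j % n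

lemma sub_mul_mod_of_mul_mod_ne_zero {n r a : ℕ} (hr : r ≤ n) (h : r * a % n ≠ 0) :
    (n - r) * a % n = n - r * a % n := by
  have hn : 0 < n := Nat.pos_of_ne_zero (by rintro rfl; simp_all)
  have hlt : n - r * a % n < n := by
    have := Nat.pos_of_ne_zero h
    omega
  rw [← Nat.mod_eq_of_lt hlt]
  refine Nat.ModEq.add_right_cancel' (r * a) ?_
  calc (n - r) * a + r * a = n * a := by rw [← add_mul, Nat.sub_add_cancel hr]
    _ ≡ 0 [MOD n] := Nat.modEq_zero_iff_dvd.mpr (dvd_mul_right n a)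
    _ ≡ n - r * a % n + r * a % n [MOD n] := by
        rw [Nat.sub_add_cancel (Nat.mod_lt _ hn).le]
        exact (Nat.modEq_zero_iff_dvd.mpr dvd_rfl).symm
    _ ≡ n - r * a % n + r * a [MOD n] := (Nat.mod_modEq (r * a) n).add_left _

lemma mul_pow_modEq_self {q n a : ℕ} (h : a * q ≡ a [MOD n]) (j : ℕ) :
    a * q ^ j ≡ a [MOD n] := by
  induction j with
  | zero => simp [Nat.ModEq.refl]
  | succ j ih =>
    calc a * q ^ (j + 1) = a * q ^ j * q := by ring
      _ ≡ a * q [MOD n] := ih.mul_right q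
      _ ≡ a [MOD n] := h

lemma pow_modEq_pow_mod {q n k : ℕ} (h : q ^ k ≡ 1 [MOD n]) (j : ℕ) :
    q ^ j ≡ q ^ (j % k) [MOD n] := by
  conv_lhs => rw [← Nat.div_add_mod j k, pow_add, pow_mul]
  simpa using (h.pow (j / k)).mul_right (q ^ (j % k))

section

variable {q : ℕ}

lemma pow_four_sub_one_div_succ (hq : 1 ≤ q) : (q ^ 4 - 1) / (q + 1) = (q - 1) * (q ^ 2 + 1) := by
  refine Nat.div_eq_of_eq_mul_left (by omega) ?_
  obtain ⟨p, rfl⟩ := Nat.exists_eq_add_of_le hq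
  have : (1 + p) ^ 4 = 1 + (1 + p - 1) * ((1 + p) ^ 2 + 1) * (1 + p + 1) := by
    rw [Nat.add_sub_cancel_left]; ring
  omega

lemma pred_mul_cube_sub_sq_sub_self_sub_two_div_succ (hq : 2 ≤ q) :
    ((q - 1) * q ^ 3 - q ^ 2 - q - 2) / (q + 1) = (q - 1) * (q ^ 2 + 1) - (q ^ 2 + 1) := by
  refine Nat.div_eq_of_eq_mul_left (by omega) ?_
  obtain ⟨p, rfl⟩ := Nat.exists_eq_add_of_le hq
  have hd : (p + 1) * ((2 + p) ^ 2 + 1) - ((2 + p) ^ 2 + 1) = p * ((2 + p) ^ 2 + 1) := by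
    rw [add_mul, one_mul, Nat.add_sub_cancel]
  rw [show 2 + p - 1 = p + 1 by omega, hd]
  have : (p + 1) * (2 + p) ^ 3 = p * ((2 + p) ^ 2 + 1) * (2 + p + 1) + (2 + p) ^ 2 + (2 + p) + 2 := by
    ring
  omega

lemma pred_mul_cube_sub_sq_sub_one_div_succ (hq : 2 ≤ q) :
    ((q - 1) * q ^ 3 - q ^ 2 - 1) / (q + 1) = (q - 1) * (q ^ 2 + 1) - q ^ 2 := by
  refine Nat.div_eq_of_eq_mul_left (by omega) ?_
  obtain ⟨p, rfl⟩ := Nat.exists_eq_add_of_le hq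
  have hd : (p + 1) * ((2 + p) ^ 2 + 1) - (2 + p) ^ 2 = p * ((2 + p) ^ 2 + 1) + 1 := by
    rw [add_mul, one_mul]; omega
  rw [show 2 + p - 1 = p + 1 by omega, hd]
  have : (p + 1) * (2 + p) ^ 3 = (p * ((2 + p) ^ 2 + 1) + 1) * (2 + p + 1) + (2 + p) ^ 2 + 1 := by
    ring
  omega

lemma sq_lt_modulus (hq : 2 ≤ q) : q ^ 2 < (q - 1) * (q ^ 2 + 1) := by
  obtain ⟨p, rfl⟩ := Nat.exists_eq_add_of_le hq
  rw [show 2 + p - 1 = p + 1 by omega]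
  nlinarith

lemma pow_four_modEq_one (hq : 1 ≤ q) : q ^ 4 ≡ 1 [MOD (q - 1) * (q ^ 2 + 1)] := by
  obtain ⟨p, rfl⟩ := Nat.exists_eq_add_of_le hq
  rw [Nat.add_sub_cancel_left]
  have : (1 + p) ^ 4 = 1 + (p * ((1 + p) ^ 2 + 1)) * (p + 2) := by ring
  rw [this]
  exact Nat.add_mul_mod_self_left 1 _ _

lemma pow_mod_pos_and_le_sq (hq : 2 ≤ q) (j : ℕ) :
    0 < q ^ j % ((q - 1) * (q ^ 2 + 1)) ∧ q ^ j % ((q - 1) * (q ^ 2 + 1)) ≤ q ^ 2 := by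
  rw [pow_modEq_pow_mod (pow_four_modEq_one (by omega)) j]
  obtain ⟨p, rfl⟩ := Nat.exists_eq_add_of_le hq
  rw [show 2 + p - 1 = p + 1 by omega]
  have hn : (p + 1) * ((2 + p) ^ 2 + 1) = p ^ 3 + 5 * p ^ 2 + 9 * p + 5 := by ring
  have hsq : (2 + p) ^ 2 = p ^ 2 + 4 * p + 4 := by ring
  have hcube : (2 + p) ^ 3 = p ^ 2 + 3 * p + 3 + (p ^ 3 + 5 * p ^ 2 + 9 * p + 5) := by ring
  rw [hn, hsq]
  have h4 : j % 4 < 4 := Nat.mod_lt _ (by norm_num)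
  interval_cases j % 4
  · rw [pow_zero, Nat.mod_eq_of_lt (by nlinarith)]; omega
  · rw [pow_one, Nat.mod_eq_of_lt (by nlinarith)]; omega
  · rw [hsq, Nat.mod_eq_of_lt (by nlinarith)]; omega
  · rw [hcube, Nat.add_mod_right, Nat.mod_eq_of_lt (by nlinarith)]; omega

lemma sub_sq_add_one_mul_modEq (hq : 2 ≤ q) :
    ((q - 1) * (q ^ 2 + 1) - (q ^ 2 + 1)) * q ≡
      (q - 1) * (q ^ 2 + 1) - (q ^ 2 + 1) [MOD (q - 1) * (q ^ 2 + 1)] := by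
  obtain ⟨p, rfl⟩ := Nat.exists_eq_add_of_le hq
  have hd : (p + 1) * ((2 + p) ^ 2 + 1) - ((2 + p) ^ 2 + 1) = p * ((2 + p) ^ 2 + 1) := by
    rw [add_mul, one_mul, Nat.add_sub_cancel]
  rw [show 2 + p - 1 = p + 1 by omega, hd]
  have : p * ((2 + p) ^ 2 + 1) * (2 + p) =
      p * ((2 + p) ^ 2 + 1) + p * ((p + 1) * ((2 + p) ^ 2 + 1)) := by ring
  rw [this]
  exact Nat.add_mul_mod_self_right _ _ _

lemma exists_lt_mul_pow_mod {r : ℕ} (hq : 2 ≤ q) (hr₀ : 0 < r) (hr : r < q ^ 2) :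
    ∃ j, r < r * q ^ j % ((q - 1) * (q ^ 2 + 1)) := by
  obtain ⟨p, rfl⟩ := Nat.exists_eq_add_of_le hq
  rw [show 2 + p - 1 = p + 1 by omega]
  have hn : (p + 1) * ((2 + p) ^ 2 + 1) = p ^ 3 + 5 * p ^ 2 + 9 * p + 5 := by ring
  have hsq : (2 + p) ^ 2 = p ^ 2 + 4 * p + 4 := by ring
  rw [hsq] at hr
  rcases lt_trichotomy r (p ^ 2 + 3 * p + 3) with hlt | rfl | hgt
  · refine ⟨1, ?_⟩
    rw [pow_one, hn, Nat.mod_eq_of_lt (by nlinarith)]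
    nlinarith
  · refine ⟨3, ?_⟩
    have : (p ^ 2 + 3 * p + 3) * (2 + p) ^ 3 =
        (2 + p) ^ 2 + (2 + p) ^ 2 * ((p + 1) * ((2 + p) ^ 2 + 1)) := by ring
    rw [this, Nat.add_mul_mod_self_right, hn, hsq, Nat.mod_eq_of_lt (by nlinarith)]
    omega
  · obtain ⟨u, rfl⟩ := Nat.exists_eq_add_of_lt hgt
    have hu : u < p := by omega
    refine ⟨2, ?_⟩
    have : (p ^ 2 + 3 * p + 3 + u + 1) * (2 + p) ^ 2 =
        (u + 1) * (2 + p) ^ 2 + (2 + p) + (2 + p) * ((p + 1) * ((2 + p) ^ 2 + 1)) := by ring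
    rw [this, Nat.add_mul_mod_self_right, hn, hsq, Nat.mod_eq_of_lt (by nlinarith)]
    nlinarith

lemma isCosetLeader_sub_sq_add_one (hq : 2 ≤ q) :
    IsCosetLeader q ((q - 1) * (q ^ 2 + 1)) ((q - 1) * (q ^ 2 + 1) - (q ^ 2 + 1)) := by
  intro j
  have hn := sq_lt_modulus hq
  rw [mul_pow_modEq_self (sub_sq_add_one_mul_modEq hq) j, Nat.mod_eq_of_lt (by omega)]

lemma isCosetLeader_sub_sq (hq : 2 ≤ q) :
    IsCosetLeader q ((q - 1) * (q ^ 2 + 1)) ((q - 1) * (q ^ 2 + 1) - q ^ 2) := by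
  intro j
  obtain ⟨hpos, hle⟩ := pow_mod_pos_and_le_sq hq (2 + j)
  rw [pow_add] at hpos hle
  rw [sub_mul_mod_of_mul_mod_ne_zero (sq_lt_modulus hq).le hpos.ne']
  omega

lemma not_isCosetLeader_sub {r : ℕ} (hq : 2 ≤ q) (hr₀ : 0 < r) (hr : r < q ^ 2) :
    ¬ IsCosetLeader q ((q - 1) * (q ^ 2 + 1)) ((q - 1) * (q ^ 2 + 1) - r) := by
  obtain ⟨j, hj⟩ := exists_lt_mul_pow_mod hq hr₀ hr
  have hn := sq_lt_modulus hq
  have hmod := Nat.mod_lt (r * q ^ j) (by omega : 0 < (q - 1) * (q ^ 2 + 1))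
  intro h
  have := h j
  rw [sub_mul_mod_of_mul_mod_ne_zero (by omega) (by omega)] at this
  omega

end

end CosetLeader

open CosetLeader in
theorem stmt_9_general (q : ℕ) :
    (∀ j : ℕ,
        ((q - 1) * q ^ 3 - q ^ 2 - q - 2) / (q + 1) ≤
          (((q - 1) * q ^ 3 - q ^ 2 - q - 2) / (q + 1) * q ^ j) % ((q ^ 4 - 1) / (q + 1))) ∧
    (∀ j : ℕ,
        ((q - 1) * q ^ 3 - q ^ 2 - 1) / (q + 1) ≤
          (((q - 1) * q ^ 3 - q ^ 2 - 1) / (q + 1) * q ^ j) % ((q ^ 4 - 1) / (q + 1))) ∧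
    (∀ δ : ℕ, ((q - 1) * q ^ 3 - q ^ 2 - 1) / (q + 1) < δ → δ < (q ^ 4 - 1) / (q + 1) →
        ∃ j : ℕ, (δ * q ^ j) % ((q ^ 4 - 1) / (q + 1)) < δ) ∧
    (∀ δ : ℕ, ((q - 1) * q ^ 3 - q ^ 2 - q - 2) / (q + 1) < δ →
        δ < ((q - 1) * q ^ 3 - q ^ 2 - 1) / (q + 1) →
        ∃ j : ℕ, (δ * q ^ j) % ((q ^ 4 - 1) / (q + 1)) < δ) := by
  rcases lt_or_ge q 2 with hq | hq
  · -- for `q ≤ 1` the modulus and both candidates are `0`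
    interval_cases q <;> simp
  rw [pow_four_sub_one_div_succ (by omega), pred_mul_cube_sub_sq_sub_self_sub_two_div_succ hq,
    pred_mul_cube_sub_sq_sub_one_div_succ hq]
  have hn := sq_lt_modulus hq
  refine ⟨isCosetLeader_sub_sq_add_one hq, isCosetLeader_sub_sq hq, fun δ hlow hup => ?_,
    fun δ hlow hup => by omega⟩
  have h := not_isCosetLeader_sub hq (r := (q - 1) * (q ^ 2 + 1) - δ) (by omega) (by omega)
  rw [Nat.sub_sub_self hup.le] at h
  simpa [IsCosetLeader] using h

theorem stmt_9 (q : ℕ) (hq : IsPrimePow q) (hodd : Odd q) :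
    (∀ j : ℕ,
        ((q - 1) * q ^ 3 - q ^ 2 - q - 2) / (q + 1) ≤
          (((q - 1) * q ^ 3 - q ^ 2 - q - 2) / (q + 1) * q ^ j) % ((q ^ 4 - 1) / (q + 1))) ∧
    (∀ j : ℕ,
        ((q - 1) * q ^ 3 - q ^ 2 - 1) / (q + 1) ≤
          (((q - 1) * q ^ 3 - q ^ 2 - 1) / (q + 1) * q ^ j) % ((q ^ 4 - 1) / (q + 1))) ∧
    (∀ δ : ℕ, ((q - 1) * q ^ 3 - q ^ 2 - 1) / (q + 1) < δ → δ < (q ^ 4 - 1) / (q + 1) →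
        ∃ j : ℕ, (δ * q ^ j) % ((q ^ 4 - 1) / (q + 1)) < δ) ∧
    (∀ δ : ℕ, ((q - 1) * q ^ 3 - q ^ 2 - q - 2) / (q + 1) < δ →
        δ < ((q - 1) * q ^ 3 - q ^ 2 - 1) / (q + 1) →
        ∃ j : ℕ, (δ * q ^ j) % ((q ^ 4 - 1) / (q + 1)) < δ) :=
  stmt_9_general q
end

section
/- Let q be a prime power and m ≥ 3 an integer. The first five largest q-cyclotomic coset leaders modulo q^4 - 1 are, in decreasing order: (q-1)q^3 - 1, (q-1)q^3 - q - 1, (q-1)q^3 - q^2 - 1, (q-1)q^3 - q^2 - q - 1, and (q-1)q^3 - q^2 - q - 2. -/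
private lemma rot_step (q a b c d : ℕ)
    (hR : b*q^3 + c*q^2 + d*q + a < q^4 - 1) :
    ((a*q^3 + b*q^2 + c*q + d) * q) % (q^4 - 1) = b*q^3 + c*q^2 + d*q + a := by
  have hpos : 0 < q^4 - 1 := lt_of_le_of_lt (Nat.zero_le _) hR
  have h4 : 1 ≤ q^4 := le_trans hpos (Nat.sub_le _ _)
  have hq4 : q^4 - 1 + 1 = q^4 := Nat.sub_add_cancel h4
  have e2 : a * q^4 = a * (q^4 - 1) + a := by
    conv_lhs => rw [← hq4]
    ring
  have e1 : (a*q^3+b*q^2+c*q+d)*q = (b*q^3+c*q^2+d*q+a) + a*(q^4-1) := by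
    have h : (a*q^3+b*q^2+c*q+d)*q = b*q^3+c*q^2+d*q + a*q^4 := by ring
    rw [h, e2]; ring
  rw [e1, Nat.add_mul_mod_self_right]
  exact Nat.mod_eq_of_lt hR

private lemma rot_lt (q a b c d : ℕ) (hq : 2 ≤ q)
    (ha : a < q) (hb : b < q) (hc : c < q) (hd : d < q)
    (h0 : a*q^3 + b*q^2 + c*q + d < q^4 - 1) :
    b*q^3 + c*q^2 + d*q + a < q^4 - 1 := by
  obtain ⟨k, rfl⟩ : ∃ k, q = k + 2 := ⟨q - 2, by omega⟩
  have hn : (k+2)^4 - 1 = (k+1)*(k+2)^3 + (k+1)*(k+2)^2 + (k+1)*(k+2) + (k+1) :=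
    Nat.sub_eq_of_eq_add (by ring)
  rw [hn] at h0 ⊢
  rcases Nat.lt_or_ge (b*(k+2)^2 + c*(k+2) + d) ((k+1)*(k+2)^2 + (k+1)*(k+2) + (k+1)) with h | h
  · have h' := Nat.mul_le_mul_left (k+2) (Nat.succ_le_of_lt h)
    nlinarith [h', ha]
  · have hs : b*(k+2)^2 + c*(k+2) + d ≤ (k+1)*(k+2)^2 + (k+1)*(k+2) + (k+1) := by nlinarith
    have h1 : a * (k+2)^3 < (k+1) * (k+2)^3 := by nlinarith
    have ha' : a < k+1 := lt_of_mul_lt_mul_right h1 (Nat.zero_le _)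
    have h' := Nat.mul_le_mul_left (k+2) hs
    nlinarith [h', ha']

private lemma top_digit (Q t x y : ℕ) (hy : y < Q)
    (hlo : t*Q ≤ x*Q + y) (hhi : x*Q + y < (t+1)*Q) : x = t := by
  have h1 : x * Q < (t+1) * Q := lt_of_le_of_lt (Nat.le_add_right _ _) hhi
  have h2 : t * Q < (x+1) * Q := by
    have h : t * Q < x * Q + Q := lt_of_le_of_lt hlo (by linarith)
    linarith [h]
  have hx1 : x < t + 1 := lt_of_mul_lt_mul_right h1 (Nat.zero_le _)
  have hx2 : t < x + 1 := lt_of_mul_lt_mul_right h2 (Nat.zero_le _)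
  omega

private lemma digits4 (q δ : ℕ) (h : δ < q^4) :
    ∃ a b c d, a < q ∧ b < q ∧ c < q ∧ d < q ∧ δ = a*q^3 + b*q^2 + c*q + d := by
  have hq : 0 < q := by
    rcases Nat.eq_zero_or_pos q with rfl | h'
    · simp at h
    · exact h'
  have hq3 : 0 < q^3 := Nat.pow_pos hq
  have hq2 : 0 < q^2 := Nat.pow_pos hq
  refine ⟨δ / q^3, δ % q^3 / q^2, δ % q^3 % q^2 / q, δ % q^3 % q^2 % q, ?_, ?_, ?_, ?_, ?_⟩
  · rw [Nat.div_lt_iff_lt_mul hq3]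
    calc δ < q^4 := h
    _ = q * q^3 := by ring
  · rw [Nat.div_lt_iff_lt_mul hq2]
    calc δ % q^3 < q^3 := Nat.mod_lt _ hq3
    _ = q * q^2 := by ring
  · rw [Nat.div_lt_iff_lt_mul hq]
    calc δ % q^3 % q^2 < q^2 := Nat.mod_lt _ hq2
    _ = q * q := by ring
  · exact Nat.mod_lt _ hq
  · have e3 := Nat.div_add_mod δ (q^3)
    have e2 := Nat.div_add_mod (δ % q^3) (q^2)
    have e1 := Nat.div_add_mod (δ % q^3 % q^2) q
    linarith [e1, e2, e3]

private lemma pow_cycle (q x j : ℕ) (hq : 2 ≤ q) :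
    (x * q^j) % (q^4 - 1) = (x * q^(j % 4)) % (q^4 - 1) := by
  have h4 : 1 ≤ q^4 := Nat.one_le_pow _ _ (by omega)
  have hm : q^4 ≡ 1 [MOD q^4 - 1] := by
    show q^4 % (q^4-1) = 1 % (q^4-1)
    conv_lhs => rw [← Nat.sub_add_cancel h4]
    exact Nat.add_mod_left _ 1
  conv_lhs => rw [← Nat.div_add_mod j 4]
  rw [pow_add, pow_mul]
  have hm2 : x * ((q^4)^(j/4) * q^(j%4)) ≡ x * (1^(j/4) * q^(j%4)) [MOD q^4-1] :=
    (Nat.ModEq.refl x).mul ((hm.pow _).mul (Nat.ModEq.refl _))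
  exact (by simpa using hm2 : x * ((q^4)^(j/4) * q^(j%4)) ≡ x * q^(j%4) [MOD q^4-1])

private lemma rot_j (q a b c d : ℕ) (hq : 2 ≤ q)
    (ha : a < q) (hb : b < q) (hc : c < q) (hd : d < q)
    (h0 : a*q^3+b*q^2+c*q+d < q^4-1) :
    ((a*q^3+b*q^2+c*q+d)*q^1) % (q^4-1) = b*q^3+c*q^2+d*q+a ∧
    ((a*q^3+b*q^2+c*q+d)*q^2) % (q^4-1) = c*q^3+d*q^2+a*q+b ∧
    ((a*q^3+b*q^2+c*q+d)*q^3) % (q^4-1) = d*q^3+a*q^2+b*q+c := by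
  have h1 := rot_lt q a b c d hq ha hb hc hd h0
  have h2 := rot_lt q b c d a hq hb hc hd ha h1
  have h3 := rot_lt q c d a b hq hc hd ha hb h2
  have r1 : ((a*q^3+b*q^2+c*q+d)*q) % (q^4-1) = b*q^3+c*q^2+d*q+a := rot_step q a b c d h1
  have r2 : ((a*q^3+b*q^2+c*q+d)*q^2) % (q^4-1) = c*q^3+d*q^2+a*q+b := by
    have e : (a*q^3+b*q^2+c*q+d)*q^2 = ((a*q^3+b*q^2+c*q+d)*q)*q := by ring
    rw [e, ← Nat.mod_mul_mod, r1]
    exact rot_step q b c d a h2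
  refine ⟨by rw [pow_one]; exact r1, r2, ?_⟩
  have e : (a*q^3+b*q^2+c*q+d)*q^3 = ((a*q^3+b*q^2+c*q+d)*q^2)*q := by ring
  rw [e, ← Nat.mod_mul_mod, r2]
  exact rot_step q c d a b h3

private lemma leader_of (q a b c d : ℕ) (hq : 2 ≤ q)
    (ha : a < q) (hb : b < q) (hc : c < q) (hd : d < q)
    (h0 : a*q^3+b*q^2+c*q+d < q^4-1)
    (l1 : a*q^3+b*q^2+c*q+d ≤ b*q^3+c*q^2+d*q+a)
    (l2 : a*q^3+b*q^2+c*q+d ≤ c*q^3+d*q^2+a*q+b)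
    (l3 : a*q^3+b*q^2+c*q+d ≤ d*q^3+a*q^2+b*q+c) :
    ∀ j, a*q^3+b*q^2+c*q+d ≤ ((a*q^3+b*q^2+c*q+d)*q^j) % (q^4-1) := by
  intro j
  obtain ⟨r1, r2, r3⟩ := rot_j q a b c d hq ha hb hc hd h0
  rw [pow_cycle q _ j hq]
  have hmod4 : j % 4 = 0 ∨ j % 4 = 1 ∨ j % 4 = 2 ∨ j % 4 = 3 := by omega
  rcases hmod4 with h | h | h | h <;> rw [h]
  · simp [Nat.mod_eq_of_lt h0]
  · rw [r1]; exact l1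
  · rw [r2]; exact l2
  · rw [r3]; exact l3

private lemma posv (k a b c d : ℕ) (ha : a < k+2) (hb : b < k+2) (hc : c < k+2) (hd : d < k+2)
    (h0 : a*(k+2)^3+b*(k+2)^2+c*(k+2)+d < (k+2)^4-1)
    (l1 : a*(k+2)^3+b*(k+2)^2+c*(k+2)+d ≤ b*(k+2)^3+c*(k+2)^2+d*(k+2)+a)
    (l2 : a*(k+2)^3+b*(k+2)^2+c*(k+2)+d ≤ c*(k+2)^3+d*(k+2)^2+a*(k+2)+b)
    (l3 : a*(k+2)^3+b*(k+2)^2+c*(k+2)+d ≤ d*(k+2)^3+a*(k+2)^2+b*(k+2)+c) :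
    ∀ j, a*(k+2)^3+b*(k+2)^2+c*(k+2)+d ≤
      ((a*(k+2)^3+b*(k+2)^2+c*(k+2)+d)*(k+2)^j) % ((k+2)^4-1) :=
  leader_of (k+2) a b c d (by omega) ha hb hc hd h0 l1 l2 l3

private lemma hnk (k : ℕ) :
    (k+2)^4 - 1 = (k+1)*(k+2)^3 + (k+1)*(k+2)^2 + (k+1)*(k+2) + (k+1) :=
  Nat.sub_eq_of_eq_add (by ring)

private lemma pos1 (k : ℕ) : ∀ j, k*(k+2)^3+(k+1)*(k+2)^2+(k+1)*(k+2)+(k+1) ≤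
    ((k*(k+2)^3+(k+1)*(k+2)^2+(k+1)*(k+2)+(k+1))*(k+2)^j) % ((k+2)^4-1) :=
  posv k k (k+1) (k+1) (k+1) (by omega) (by omega) (by omega) (by omega)
    (by rw [hnk]; nlinarith) (by nlinarith) (by nlinarith) (by nlinarith)

private lemma pos2 (k : ℕ) : ∀ j, k*(k+2)^3+(k+1)*(k+2)^2+k*(k+2)+(k+1) ≤
    ((k*(k+2)^3+(k+1)*(k+2)^2+k*(k+2)+(k+1))*(k+2)^j) % ((k+2)^4-1) :=
  posv k k (k+1) k (k+1) (by omega) (by omega) (by omega) (by omega)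
    (by rw [hnk]; nlinarith) (by nlinarith) (by nlinarith) (by nlinarith)

private lemma pos3 (k : ℕ) : ∀ j, k*(k+2)^3+k*(k+2)^2+(k+1)*(k+2)+(k+1) ≤
    ((k*(k+2)^3+k*(k+2)^2+(k+1)*(k+2)+(k+1))*(k+2)^j) % ((k+2)^4-1) :=
  posv k k k (k+1) (k+1) (by omega) (by omega) (by omega) (by omega)
    (by rw [hnk]; nlinarith) (by nlinarith) (by nlinarith) (by nlinarith)

private lemma pos4 (k : ℕ) : ∀ j, k*(k+2)^3+k*(k+2)^2+k*(k+2)+(k+1) ≤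
    ((k*(k+2)^3+k*(k+2)^2+k*(k+2)+(k+1))*(k+2)^j) % ((k+2)^4-1) :=
  posv k k k k (k+1) (by omega) (by omega) (by omega) (by omega)
    (by rw [hnk]; nlinarith) (by nlinarith) (by nlinarith) (by nlinarith)

private lemma pos5 (k : ℕ) : ∀ j, k*(k+2)^3+k*(k+2)^2+k*(k+2)+k ≤
    ((k*(k+2)^3+k*(k+2)^2+k*(k+2)+k)*(k+2)^j) % ((k+2)^4-1) :=
  posv k k k k k (by omega) (by omega) (by omega) (by omega)
    (by rw [hnk]; nlinarith) (by nlinarith) (by nlinarith) (by nlinarith)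

private lemma gap1 (k δ : ℕ)
    (h1 : k*(k+2)^3+(k+1)*(k+2)^2+(k+1)*(k+2)+(k+1) < δ) (h2 : δ < (k+2)^4 - 1) :
    ∃ j : ℕ, (δ * (k+2)^j) % ((k+2)^4 - 1) < δ := by
  have hδ4 : δ < (k+2)^4 := lt_of_lt_of_le h2 (Nat.sub_le _ _)
  obtain ⟨a, b, c, d, ha, hb, hc, hd, rfl⟩ := digits4 (k+2) δ hδ4
  have pb : b*(k+2)^2 ≤ (k+1)*(k+2)^2 := Nat.mul_le_mul (by omega) (le_refl _)
  have pc : c*(k+2) ≤ (k+1)*(k+2) := Nat.mul_le_mul (by omega) (le_refl _)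
  have z1 := Nat.zero_le ((k+1)*(k+2)^2)
  have z2 := Nat.zero_le (k*(k+2))
  have z3 := Nat.zero_le ((k+1)*(k+2))
  have z4 := Nat.zero_le (k*(k+2)^2)
  have z5 := Nat.zero_le ((k+2)^3)
  have hy : b*(k+2)^2 + c*(k+2) + d < (k+2)^3 := by linarith
  have haq : a = k + 1 := by
    apply top_digit ((k+2)^3) (k+1) a _ hy
    · linarith
    · linarith
  subst haq
  have hbcd : b ≤ k ∨ c ≤ k ∨ d ≤ k := by
    by_contra hcon
    push_neg at hcon
    obtain ⟨hb1, hc1, hd1⟩ := hcon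
    have hb2 : b = k+1 := by omega
    have hc2 : c = k+1 := by omega
    have hd2 : d = k+1 := by omega
    rw [hnk, hb2, hc2, hd2] at h2
    linarith
  obtain ⟨r1, r2, r3⟩ := rot_j (k+2) (k+1) b c d (by omega) (by omega) hb hc hd h2
  rcases hbcd with h | h | h
  · refine ⟨1, ?_⟩
    rw [r1]
    have p1 : b*(k+2)^3 ≤ k*(k+2)^3 := Nat.mul_le_mul h (le_refl _)
    have p2 : c*(k+2)^2 ≤ (k+1)*(k+2)^2 := Nat.mul_le_mul (by omega) (le_refl _)
    have p3 : d*(k+2) ≤ (k+1)*(k+2) := Nat.mul_le_mul (by omega) (le_refl _)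
    linarith
  · refine ⟨2, ?_⟩
    rw [r2]
    have p1 : c*(k+2)^3 ≤ k*(k+2)^3 := Nat.mul_le_mul h (le_refl _)
    have p2 : d*(k+2)^2 ≤ (k+1)*(k+2)^2 := Nat.mul_le_mul (by omega) (le_refl _)
    linarith
  · refine ⟨3, ?_⟩
    rw [r3]
    have p1 : d*(k+2)^3 ≤ k*(k+2)^3 := Nat.mul_le_mul h (le_refl _)
    have p2 : b*(k+2) ≤ (k+1)*(k+2) := Nat.mul_le_mul (by omega) (le_refl _)
    linarith

private lemma gap2 (k δ : ℕ)
    (h1 : k*(k+2)^3+(k+1)*(k+2)^2+k*(k+2)+(k+1) < δ)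
    (h2 : δ < k*(k+2)^3+(k+1)*(k+2)^2+(k+1)*(k+2)+(k+1)) :
    ∃ j : ℕ, (δ * (k+2)^j) % ((k+2)^4 - 1) < δ := by
  have z1 := Nat.zero_le ((k+1)*(k+2)^2)
  have z2 := Nat.zero_le (k*(k+2))
  have z3 := Nat.zero_le ((k+1)*(k+2))
  have z4 := Nat.zero_le (k*(k+2)^2)
  have z5 := Nat.zero_le ((k+2)^3)
  have h2n : δ < (k+2)^4 - 1 := by rw [hnk]; linarith
  have hδ4 : δ < (k+2)^4 := lt_of_lt_of_le h2n (Nat.sub_le _ _)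
  obtain ⟨a, b, c, d, ha, hb, hc, hd, rfl⟩ := digits4 (k+2) δ hδ4
  have pb : b*(k+2)^2 ≤ (k+1)*(k+2)^2 := Nat.mul_le_mul (by omega) (le_refl _)
  have pc : c*(k+2) ≤ (k+1)*(k+2) := Nat.mul_le_mul (by omega) (le_refl _)
  have hy : b*(k+2)^2 + c*(k+2) + d < (k+2)^3 := by linarith
  have haq : a = k := by
    apply top_digit ((k+2)^3) k a _ hy
    · linarith
    · linarith
  rw [haq] at h1 h2 h2n ⊢
  have hz : c*(k+2) + d < (k+2)^2 := by linarith
  have hbq : b = k+1 := by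
    apply top_digit ((k+2)^2) (k+1) b _ hz
    · linarith
    · linarith
  subst hbq
  have hcq : c = k+1 := by
    apply top_digit (k+2) (k+1) c d hd
    · linarith
    · linarith
  subst hcq
  have hdk : d ≤ k := by linarith
  obtain ⟨r1, r2, r3⟩ := rot_j (k+2) k (k+1) (k+1) d (by omega) (by omega) (by omega)
    (by omega) hd h2n
  refine ⟨3, ?_⟩
  rw [r3]
  clear h1 h2 z1 z2 z3 z4 z5 pb pc hy hz ha hδ4 h2n r1 r2 r3
  obtain ⟨t, rfl⟩ := Nat.exists_eq_add_of_le hdk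
  have hA : t*1 ≤ t*(d+t+2)^3 := Nat.mul_le_mul (le_refl t) (Nat.one_le_pow _ _ (by omega))
  have hB : 2*2 ≤ (d+t+2)*(d+t+2) := Nat.mul_le_mul (by omega) (by omega)
  linarith

private lemma gap3 (k δ : ℕ)
    (h1 : k*(k+2)^3+k*(k+2)^2+(k+1)*(k+2)+(k+1) < δ)
    (h2 : δ < k*(k+2)^3+(k+1)*(k+2)^2+k*(k+2)+(k+1)) :
    ∃ j : ℕ, (δ * (k+2)^j) % ((k+2)^4 - 1) < δ := by
  have z1 := Nat.zero_le ((k+1)*(k+2)^2)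
  have z2 := Nat.zero_le (k*(k+2))
  have z3 := Nat.zero_le ((k+1)*(k+2))
  have z4 := Nat.zero_le (k*(k+2)^2)
  have z5 := Nat.zero_le ((k+2)^3)
  have h2n : δ < (k+2)^4 - 1 := by rw [hnk]; linarith
  have hδ4 : δ < (k+2)^4 := lt_of_lt_of_le h2n (Nat.sub_le _ _)
  obtain ⟨a, b, c, d, ha, hb, hc, hd, rfl⟩ := digits4 (k+2) δ hδ4
  have pb : b*(k+2)^2 ≤ (k+1)*(k+2)^2 := Nat.mul_le_mul (by omega) (le_refl _)
  have pc : c*(k+2) ≤ (k+1)*(k+2) := Nat.mul_le_mul (by omega) (le_refl _)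
  have hy : b*(k+2)^2 + c*(k+2) + d < (k+2)^3 := by linarith
  have haq : a = k := by
    apply top_digit ((k+2)^3) k a _ hy
    · linarith
    · linarith
  rw [haq] at h1 h2 h2n ⊢
  have hz : c*(k+2) + d < (k+2)^2 := by linarith
  have hbq : b = k+1 := by
    apply top_digit ((k+2)^2) (k+1) b _ hz
    · linarith
    · linarith
  subst hbq
  have hck : c ≤ k := by
    have hcc : c*(k+2) < (k+1)*(k+2) := by linarith
    have := lt_of_mul_lt_mul_right hcc (Nat.zero_le _)
    omega
  obtain ⟨r1, r2, r3⟩ := rot_j (k+2) k (k+1) c d (by omega) (by omega) (by omega)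
    hc hd h2n
  refine ⟨2, ?_⟩
  rw [r2]
  have hdk2 : d ≤ k + 1 := by omega
  clear h1 z1 z2 z3 z4 z5 pb pc hy hz ha hb hδ4 h2n r1 r2 r3
  rcases Nat.lt_or_ge c k with hck2 | hck2
  · -- c < k
    clear h2
    obtain ⟨t, rfl⟩ : ∃ t, k = c + t + 1 := ⟨k - c - 1, by omega⟩
    have hd' : (d : ℤ) ≤ (c : ℤ) + t + 2 := by exact_mod_cast (by omega : d ≤ c + t + 2)
    zify
    have hA : (0:ℤ) ≤ ((c:ℤ)+t+2-d) * (((c:ℤ)+t+3)^2 - 1) :=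
      mul_nonneg (by linarith) (by nlinarith [sq_nonneg ((c:ℤ)+t+3)])
    have hB : (0:ℤ) ≤ (t:ℤ) * (((c:ℤ)+t+3)^3 - ((c:ℤ)+t+3)) :=
      mul_nonneg (by positivity) (by nlinarith [sq_nonneg ((c:ℤ)+t+3)])
    nlinarith [hA, hB]
  · -- c = k
    have hceq : c = k := by omega
    subst hceq
    have hdk : d ≤ c := by linarith
    clear h2
    obtain ⟨s, rfl⟩ := Nat.exists_eq_add_of_le hdk
    have hA : s*1 ≤ s*(d+s+2)^2 := Nat.mul_le_mul (le_refl s) (Nat.one_le_pow _ _ (by omega))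
    have hB : 2*2 ≤ (d+s+2)*(d+s+2) := Nat.mul_le_mul (by omega) (by omega)
    linarith

private lemma gap4 (k δ : ℕ)
    (h1 : k*(k+2)^3+k*(k+2)^2+k*(k+2)+(k+1) < δ)
    (h2 : δ < k*(k+2)^3+k*(k+2)^2+(k+1)*(k+2)+(k+1)) :
    ∃ j : ℕ, (δ * (k+2)^j) % ((k+2)^4 - 1) < δ := by
  have z1 := Nat.zero_le ((k+1)*(k+2)^2)
  have z2 := Nat.zero_le (k*(k+2))
  have z3 := Nat.zero_le ((k+1)*(k+2))
  have z4 := Nat.zero_le (k*(k+2)^2)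
  have z5 := Nat.zero_le ((k+2)^3)
  have z6 := Nat.zero_le (k*(k+2)^3)
  have h2n : δ < (k+2)^4 - 1 := by rw [hnk]; linarith
  have hδ4 : δ < (k+2)^4 := lt_of_lt_of_le h2n (Nat.sub_le _ _)
  obtain ⟨a, b, c, d, ha, hb, hc, hd, rfl⟩ := digits4 (k+2) δ hδ4
  have pb : b*(k+2)^2 ≤ (k+1)*(k+2)^2 := Nat.mul_le_mul (by omega) (le_refl _)
  have pc : c*(k+2) ≤ (k+1)*(k+2) := Nat.mul_le_mul (by omega) (le_refl _)
  have hy : b*(k+2)^2 + c*(k+2) + d < (k+2)^3 := by linarith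
  have haq : a = k := by
    apply top_digit ((k+2)^3) k a _ hy
    · linarith
    · linarith
  rw [haq] at h1 h2 h2n ⊢
  have hz : c*(k+2) + d < (k+2)^2 := by linarith
  have hbq : b = k := by
    apply top_digit ((k+2)^2) k b _ hz
    · linarith
    · linarith
  rw [hbq] at h1 h2 h2n ⊢
  have hcq : c = k+1 := by
    apply top_digit (k+2) (k+1) c d hd
    · linarith
    · linarith
  subst hcq
  have hdk : d ≤ k := by linarith
  obtain ⟨r1, r2, r3⟩ := rot_j (k+2) k k (k+1) d (by omega) (by omega) (by omega)
    (by omega) hd h2n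
  refine ⟨3, ?_⟩
  rw [r3]
  clear h1 h2 z1 z2 z3 z4 z5 z6 pb pc hy hz ha hb hδ4 h2n r1 r2 r3
  obtain ⟨t, rfl⟩ := Nat.exists_eq_add_of_le hdk
  have hA : t*1 ≤ t*(d+t+2)^3 := Nat.mul_le_mul (le_refl t) (Nat.one_le_pow _ _ (by omega))
  linarith

set_option maxHeartbeats 1000000 in
theorem stmt_10 (q m : ℕ) (hq : IsPrimePow q) (hm : 3 ≤ m) :
    (∀ j : ℕ, (q - 1) * q ^ 3 - 1 ≤ (((q - 1) * q ^ 3 - 1) * q ^ j) % (q ^ 4 - 1)) ∧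
    (∀ j : ℕ, (q - 1) * q ^ 3 - q - 1 ≤ (((q - 1) * q ^ 3 - q - 1) * q ^ j) % (q ^ 4 - 1)) ∧
    (∀ j : ℕ, (q - 1) * q ^ 3 - q ^ 2 - 1 ≤
        (((q - 1) * q ^ 3 - q ^ 2 - 1) * q ^ j) % (q ^ 4 - 1)) ∧
    (∀ j : ℕ, (q - 1) * q ^ 3 - q ^ 2 - q - 1 ≤
        (((q - 1) * q ^ 3 - q ^ 2 - q - 1) * q ^ j) % (q ^ 4 - 1)) ∧
    (∀ j : ℕ, (q - 1) * q ^ 3 - q ^ 2 - q - 2 ≤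
        (((q - 1) * q ^ 3 - q ^ 2 - q - 2) * q ^ j) % (q ^ 4 - 1)) ∧
    (∀ δ : ℕ, (q - 1) * q ^ 3 - 1 < δ → δ < q ^ 4 - 1 →
        ∃ j : ℕ, (δ * q ^ j) % (q ^ 4 - 1) < δ) ∧
    (∀ δ : ℕ, (q - 1) * q ^ 3 - q - 1 < δ → δ < (q - 1) * q ^ 3 - 1 →
        ∃ j : ℕ, (δ * q ^ j) % (q ^ 4 - 1) < δ) ∧
    (∀ δ : ℕ, (q - 1) * q ^ 3 - q ^ 2 - 1 < δ → δ < (q - 1) * q ^ 3 - q - 1 →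
        ∃ j : ℕ, (δ * q ^ j) % (q ^ 4 - 1) < δ) ∧
    (∀ δ : ℕ, (q - 1) * q ^ 3 - q ^ 2 - q - 1 < δ → δ < (q - 1) * q ^ 3 - q ^ 2 - 1 →
        ∃ j : ℕ, (δ * q ^ j) % (q ^ 4 - 1) < δ) ∧
    (∀ δ : ℕ, (q - 1) * q ^ 3 - q ^ 2 - q - 2 < δ → δ < (q - 1) * q ^ 3 - q ^ 2 - q - 1 →
        ∃ j : ℕ, (δ * q ^ j) % (q ^ 4 - 1) < δ) := by
  have hq2 : 2 ≤ q := hq.two_le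
  clear hq hm
  obtain ⟨k, rfl⟩ : ∃ k, q = k + 2 := ⟨q - 2, by omega⟩
  have hk1 : k + 2 - 1 = k + 1 := rfl
  have hv1 : (k+2-1)*(k+2)^3 - 1 = k*(k+2)^3 + (k+1)*(k+2)^2 + (k+1)*(k+2) + (k+1) := by
    rw [hk1]; exact Nat.sub_eq_of_eq_add (by ring)
  have hv2 : (k+2-1)*(k+2)^3 - (k+2) - 1 = k*(k+2)^3 + (k+1)*(k+2)^2 + k*(k+2) + (k+1) := by
    rw [hk1, Nat.sub_sub]; exact Nat.sub_eq_of_eq_add (by ring)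
  have hv3 : (k+2-1)*(k+2)^3 - (k+2)^2 - 1 = k*(k+2)^3 + k*(k+2)^2 + (k+1)*(k+2) + (k+1) := by
    rw [hk1, Nat.sub_sub]; exact Nat.sub_eq_of_eq_add (by ring)
  have hv4 : (k+2-1)*(k+2)^3 - (k+2)^2 - (k+2) - 1
      = k*(k+2)^3 + k*(k+2)^2 + k*(k+2) + (k+1) := by
    rw [hk1, Nat.sub_sub, Nat.sub_sub]; exact Nat.sub_eq_of_eq_add (by ring)
  have hv5 : (k+2-1)*(k+2)^3 - (k+2)^2 - (k+2) - 2
      = k*(k+2)^3 + k*(k+2)^2 + k*(k+2) + k := by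
    rw [hk1, Nat.sub_sub, Nat.sub_sub]; exact Nat.sub_eq_of_eq_add (by ring)
  refine ⟨?_, ?_, ?_, ?_, ?_, ?_, ?_, ?_, ?_, ?_⟩
  · simp only [hv1]; exact pos1 k
  · simp only [hv2]; exact pos2 k
  · simp only [hv3]; exact pos3 k
  · simp only [hv4]; exact pos4 k
  · simp only [hv5]; exact pos5 k
  · intro δ h1 h2
    rw [hv1] at h1
    exact gap1 k δ h1 h2
  · intro δ h1 h2
    rw [hv2] at h1; rw [hv1] at h2
    exact gap2 k δ h1 h2
  · intro δ h1 h2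
    rw [hv3] at h1; rw [hv2] at h2
    exact gap3 k δ h1 h2
  · intro δ h1 h2
    rw [hv4] at h1; rw [hv3] at h2
    exact gap4 k δ h1 h2
  · intro δ h1 h2
    exfalso
    rw [hv5] at h1; rw [hv4] at h2
    linarith
end

section
/- Let q be a prime power, m ≥ 4 even with m ≡ 0 (mod 4), n = (q^m-1)/(q+1), and δ₁ = ((q-1)·q^(m-1) - q^(m/2) - 1)/(q+1). Then the q-cyclotomic coset of δ₁ modulo n has size m, i.e., m is the least positive integer ℓ with δ₁·q^ℓ ≡ δ₁ (mod n). -/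
set_option maxHeartbeats 1000000 in
theorem stmt_11 (q m : ℕ) (hq : IsPrimePow q) (hm : 4 ≤ m) (hm4 : m % 4 = 0) :
    (((q - 1) * q ^ (m - 1) - q ^ (m / 2) - 1) / (q + 1) * q ^ m) ≡
        ((q - 1) * q ^ (m - 1) - q ^ (m / 2) - 1) / (q + 1)
          [MOD (q ^ m - 1) / (q + 1)] ∧
    ∀ ℓ : ℕ, 0 < ℓ → ℓ < m →
      ¬ ((((q - 1) * q ^ (m - 1) - q ^ (m / 2) - 1) / (q + 1) * q ^ ℓ) ≡
          ((q - 1) * q ^ (m - 1) - q ^ (m / 2) - 1) / (q + 1)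
            [MOD (q ^ m - 1) / (q + 1)]) := by
  obtain ⟨w, rfl⟩ : ∃ w, m = 4 * w + 4 := ⟨(m - 4) / 4, by omega⟩
  rw [show 4 * w + 4 - 1 = 4 * w + 3 from by omega,
      show (4 * w + 4) / 2 = 2 * w + 2 from by omega]
  have hq2 : 2 ≤ q := hq.two_le
  have hq1 : 1 ≤ q := by omega
  have ha : (2 : ℤ) ≤ (q : ℤ) := by exact_mod_cast hq2
  have ha1 : (1 : ℤ) ≤ (q : ℤ) := by linarith
  have hpow : ∀ i j : ℕ, i ≤ j → (q : ℤ) ^ i ≤ (q : ℤ) ^ j :=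
    fun i j h => pow_le_pow_right₀ ha1 h
  have hpos : ∀ i : ℕ, (0 : ℤ) < (q : ℤ) ^ i := fun i => pow_pos (by linarith) i
  have hstep : ∀ i j : ℕ, i + 1 ≤ j → 2 * (q : ℤ) ^ i ≤ (q : ℤ) ^ j := by
    intro i j hij
    calc 2 * (q : ℤ) ^ i ≤ (q : ℤ) * (q : ℤ) ^ i := by nlinarith [hpos i]
      _ = (q : ℤ) ^ (i + 1) := by rw [pow_succ]; ring
      _ ≤ (q : ℤ) ^ j := hpow _ _ hij
  -- ℕ-side inequalities for casting subtraction
  have hNpow : ∀ i j : ℕ, i ≤ j → q ^ i ≤ q ^ j := fun i j h => Nat.pow_le_pow_right hq1 h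
  have hNpos : ∀ i : ℕ, 1 ≤ q ^ i := fun i => Nat.one_le_pow _ _ (by omega)
  have hNstep : ∀ i j : ℕ, i + 1 ≤ j → 2 * q ^ i ≤ q ^ j := by
    intro i j hij
    calc 2 * q ^ i ≤ q * q ^ i := by nlinarith [hNpos i, hq2]
      _ = q ^ (i + 1) := by rw [pow_succ]; ring
      _ ≤ q ^ j := hNpow _ _ hij
  have key1 : q ^ (2 * w + 2) + 1 ≤ (q - 1) * q ^ (4 * w + 3) := by
    have h1 := hNpow (2 * w + 2) (4 * w + 2) (by omega)
    have h2 := hNstep (4 * w + 2) (4 * w + 3) (by omega)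
    have h3 := hNpos (4 * w + 2)
    have h4 : q ^ (4 * w + 3) ≤ (q - 1) * q ^ (4 * w + 3) :=
      Nat.le_mul_of_pos_left _ (by omega)
    omega
  have key2 : 1 ≤ q ^ (4 * w + 4) := hNpos _
  -- casts
  have hAcast : ((((q : ℕ) - 1) * q ^ (4 * w + 3) - q ^ (2 * w + 2) - 1 : ℕ) : ℤ)
      = ((q : ℤ) - 1) * (q : ℤ) ^ (4 * w + 3) - (q : ℤ) ^ (2 * w + 2) - 1 := by
    rw [Nat.cast_sub (by omega), Nat.cast_sub (by omega), Nat.cast_mul,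
        Nat.cast_sub hq1]
    push_cast
    ring
  have hNcast : ((q ^ (4 * w + 4) - 1 : ℕ) : ℤ) = (q : ℤ) ^ (4 * w + 4) - 1 := by
    rw [Nat.cast_sub key2]
    push_cast
    ring
  -- divisibility by q+1
  have hmod : (q : ℤ) ≡ -1 [ZMOD ((q : ℤ) + 1)] :=
    Int.modEq_iff_dvd.mpr ⟨-1, by ring⟩
  have hdvdA : ((q : ℤ) + 1) ∣ ((q : ℤ) - 1) * (q : ℤ) ^ (4 * w + 3) - (q : ℤ) ^ (2 * w + 2) - 1 := by
    have h2 : ((q : ℤ) - 1) * (q : ℤ) ^ (4 * w + 3) - (q : ℤ) ^ (2 * w + 2) - 1 ≡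
        ((-1 : ℤ) - 1) * (-1 : ℤ) ^ (4 * w + 3) - (-1 : ℤ) ^ (2 * w + 2) - 1
          [ZMOD ((q : ℤ) + 1)] :=
      (((hmod.sub_right 1).mul (hmod.pow _)).sub (hmod.pow _)).sub (Int.ModEq.refl 1)
    have h3 : ((-1 : ℤ) - 1) * (-1 : ℤ) ^ (4 * w + 3) - (-1 : ℤ) ^ (2 * w + 2) - 1 = 0 := by
      have e1 : ((-1 : ℤ)) ^ (4 * w + 3) = -1 := Odd.neg_one_pow ⟨2 * w + 1, by ring⟩
      have e2 : ((-1 : ℤ)) ^ (2 * w + 2) = 1 := Even.neg_one_pow ⟨w + 1, by ring⟩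
      rw [e1, e2]; ring
    exact Int.modEq_zero_iff_dvd.mp (h3 ▸ h2)
  have hdvdN : ((q : ℤ) + 1) ∣ (q : ℤ) ^ (4 * w + 4) - 1 := by
    have h2 : (q : ℤ) ^ (4 * w + 4) - 1 ≡ (-1 : ℤ) ^ (4 * w + 4) - 1 [ZMOD ((q : ℤ) + 1)] :=
      (hmod.pow _).sub (Int.ModEq.refl 1)
    have h3 : ((-1 : ℤ)) ^ (4 * w + 4) - 1 = 0 := by
      rw [Even.neg_one_pow ⟨2 * w + 2, by ring⟩]; ring
    exact Int.modEq_zero_iff_dvd.mp (h3 ▸ h2)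
  have hdvdAN : (q + 1) ∣ (q - 1) * q ^ (4 * w + 3) - q ^ (2 * w + 2) - 1 := by
    have : ((q : ℤ) + 1) ∣ (((q - 1) * q ^ (4 * w + 3) - q ^ (2 * w + 2) - 1 : ℕ) : ℤ) := by
      rw [hAcast]; exact hdvdA
    exact_mod_cast this
  have hdvdNN : (q + 1) ∣ q ^ (4 * w + 4) - 1 := by
    have : ((q : ℤ) + 1) ∣ ((q ^ (4 * w + 4) - 1 : ℕ) : ℤ) := by
      rw [hNcast]; exact hdvdN
    exact_mod_cast this
  have hδ : ((((q - 1) * q ^ (4 * w + 3) - q ^ (2 * w + 2) - 1) / (q + 1) : ℕ) : ℤ) * ((q : ℤ) + 1)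
      = (((q - 1) * q ^ (4 * w + 3) - q ^ (2 * w + 2) - 1 : ℕ) : ℤ) := by
    rw [show ((q : ℤ) + 1) = ((q + 1 : ℕ) : ℤ) from by push_cast; ring, ← Nat.cast_mul,
        Nat.div_mul_cancel hdvdAN]
  have hn : (((q ^ (4 * w + 4) - 1) / (q + 1) : ℕ) : ℤ) * ((q : ℤ) + 1)
      = (q : ℤ) ^ (4 * w + 4) - 1 := by
    rw [show ((q : ℤ) + 1) = ((q + 1 : ℕ) : ℤ) from by push_cast; ring, ← Nat.cast_mul,
        Nat.div_mul_cancel hdvdNN, hNcast]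
  -- the key equivalence
  have hiff : ∀ ℓ : ℕ,
      (((q - 1) * q ^ (4 * w + 3) - q ^ (2 * w + 2) - 1) / (q + 1) * q ^ ℓ ≡
        ((q - 1) * q ^ (4 * w + 3) - q ^ (2 * w + 2) - 1) / (q + 1)
          [MOD (q ^ (4 * w + 4) - 1) / (q + 1)]) ↔
      ((q : ℤ) ^ (4 * w + 4) - 1) ∣
        (((q : ℤ) - 1) * (q : ℤ) ^ (4 * w + 3) - (q : ℤ) ^ (2 * w + 2) - 1) * ((q : ℤ) ^ ℓ - 1) := by
    intro ℓ
    rw [Nat.modEq_iff_dvd]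
    rw [show ((((q - 1) * q ^ (4 * w + 3) - q ^ (2 * w + 2) - 1) / (q + 1) : ℕ) : ℤ) -
          ((((q - 1) * q ^ (4 * w + 3) - q ^ (2 * w + 2) - 1) / (q + 1) * q ^ ℓ : ℕ) : ℤ)
        = -(((((q - 1) * q ^ (4 * w + 3) - q ^ (2 * w + 2) - 1) / (q + 1) : ℕ) : ℤ) *
            ((q : ℤ) ^ ℓ - 1)) from by push_cast; ring]
    rw [dvd_neg,
        ← mul_dvd_mul_iff_right (show (q : ℤ) + 1 ≠ 0 from by linarith), hn,
        mul_right_comm, hδ, hAcast]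
  constructor
  · exact (hiff (4 * w + 4)).mpr (dvd_mul_left _ _)
  · intro ℓ hl0 hlm h
    replace h := (hiff ℓ).mp h
    -- reduce to N ∣ (a^(2w+3)+1)(a^ℓ-1)
    have hco : IsCoprime ((q : ℤ) ^ (4 * w + 4) - 1) ((q : ℤ) ^ (4 * w + 3)) :=
      ⟨-1, (q : ℤ), by ring⟩
    have h1 : ((q : ℤ) ^ (4 * w + 4) - 1) ∣
        (((q : ℤ) ^ (2 * w + 3) + 1) * ((q : ℤ) ^ ℓ - 1)) * (q : ℤ) ^ (4 * w + 3) := by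
      have e : (((q : ℤ) ^ (2 * w + 3) + 1) * ((q : ℤ) ^ ℓ - 1)) * (q : ℤ) ^ (4 * w + 3)
          = ((q : ℤ) ^ (4 * w + 4) - 1) * ((1 + (q : ℤ) ^ (2 * w + 2)) * ((q : ℤ) ^ ℓ - 1)) -
            (((q : ℤ) - 1) * (q : ℤ) ^ (4 * w + 3) - (q : ℤ) ^ (2 * w + 2) - 1) *
              ((q : ℤ) ^ ℓ - 1) := by ring
      rw [e]
      exact dvd_sub (Dvd.intro _ rfl) h
    have h2 : ((q : ℤ) ^ (4 * w + 4) - 1) ∣ ((q : ℤ) ^ (2 * w + 3) + 1) * ((q : ℤ) ^ ℓ - 1) :=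
      hco.dvd_of_dvd_mul_right h1
    have hℓ1 : (q : ℤ) ≤ (q : ℤ) ^ ℓ := by
      have := hpow 1 ℓ (by omega)
      rwa [pow_one] at this
    rcases lt_or_ge ℓ (2 * w + 1) with hc | hc
    · -- 1 ≤ ℓ ≤ 2w : the product itself lies strictly between 0 and N
      have hBpos : 0 < ((q : ℤ) ^ (2 * w + 3) + 1) * ((q : ℤ) ^ ℓ - 1) := by
        have := hpos (2 * w + 3)
        nlinarith
      have hle : (q : ℤ) ^ ℓ ≤ (q : ℤ) ^ (2 * w) := hpow ℓ (2 * w) (by omega)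
      have e1 : (q : ℤ) ^ (2 * w + 3) * (q : ℤ) ^ (2 * w) = (q : ℤ) ^ (4 * w + 3) := by
        rw [← pow_add]; congr 1; omega
      have hBle : ((q : ℤ) ^ (2 * w + 3) + 1) * ((q : ℤ) ^ ℓ - 1) ≤
          ((q : ℤ) ^ (2 * w + 3) + 1) * ((q : ℤ) ^ (2 * w) - 1) := by
        have := hpos (2 * w + 3)
        nlinarith
      have e2 : ((q : ℤ) ^ (2 * w + 3) + 1) * ((q : ℤ) ^ (2 * w) - 1)
          = (q : ℤ) ^ (4 * w + 3) + (q : ℤ) ^ (2 * w) - (q : ℤ) ^ (2 * w + 3) - 1 := by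
        rw [← e1]; ring
      have hled := Int.le_of_dvd hBpos h2
      have hs1 := hstep (4 * w + 3) (4 * w + 4) (by omega)
      have hs2 := hpow (2 * w) (4 * w + 3) (by omega)
      have hs3 := hpos (2 * w + 3)
      linarith only [hled, hBle, e2, hs1, hs2, hs3]
    · -- ℓ ≥ 2w+1 : subtract (a^(4w+4)-1)*a^r
      obtain ⟨r, rfl⟩ : ∃ r, ℓ = r + (2 * w + 1) := ⟨ℓ - (2 * w + 1), by omega⟩
      have hr2 : r ≤ 2 * w + 2 := by omega
      have hC : ((q : ℤ) ^ (4 * w + 4) - 1) ∣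
          ((q : ℤ) ^ (r + (2 * w + 1)) + (q : ℤ) ^ r - (q : ℤ) ^ (2 * w + 3) - 1) := by
        have e : (q : ℤ) ^ (r + (2 * w + 1)) + (q : ℤ) ^ r - (q : ℤ) ^ (2 * w + 3) - 1
            = ((q : ℤ) ^ (2 * w + 3) + 1) * ((q : ℤ) ^ (r + (2 * w + 1)) - 1) -
              ((q : ℤ) ^ (4 * w + 4) - 1) * (q : ℤ) ^ r := by ring
        rw [e]
        exact dvd_sub h2 (Dvd.intro _ rfl)
      rcases Nat.lt_or_ge r 2 with hr | hr
      · interval_cases r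
        · -- r = 0 : residue a^(2w+1) - a^(2w+3)
          have hC' : ((q : ℤ) ^ (4 * w + 4) - 1) ∣ ((q : ℤ) ^ (2 * w + 3) - (q : ℤ) ^ (2 * w + 1)) := by
            have h' := (dvd_neg).mpr hC
            have e : -((q : ℤ) ^ (0 + (2 * w + 1)) + (q : ℤ) ^ 0 - (q : ℤ) ^ (2 * w + 3) - 1)
                = (q : ℤ) ^ (2 * w + 3) - (q : ℤ) ^ (2 * w + 1) := by
              rw [show 0 + (2 * w + 1) = 2 * w + 1 from by omega, pow_zero]; ring
            rwa [e] at h'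
          have hs1 := hpow (2 * w + 1) (2 * w + 2) (by omega)
          have hs2 := hstep (2 * w + 2) (2 * w + 3) (by omega)
          have hs3 := hpos (2 * w + 1)
          have hpos1 : (0 : ℤ) < (q : ℤ) ^ (2 * w + 3) - (q : ℤ) ^ (2 * w + 1) := by
            linarith only [hs1, hs2, hs3]
          have hled := Int.le_of_dvd hpos1 hC'
          have hs4 := hpow (2 * w + 3) (4 * w + 3) (by omega)
          have hs5 := hstep (4 * w + 3) (4 * w + 4) (by omega)
          have hs6 := hpos (4 * w + 3)
          linarith only [hled, hs3, hs4, hs5, hs6]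
        · -- r = 1 : residue a^(2w+2) + a - a^(2w+3) - 1
          have hC' : ((q : ℤ) ^ (4 * w + 4) - 1) ∣
              ((q : ℤ) ^ (2 * w + 3) + 1 - (q : ℤ) ^ (2 * w + 2) - (q : ℤ)) := by
            have h' := (dvd_neg).mpr hC
            have e : -((q : ℤ) ^ (1 + (2 * w + 1)) + (q : ℤ) ^ 1 - (q : ℤ) ^ (2 * w + 3) - 1)
                = (q : ℤ) ^ (2 * w + 3) + 1 - (q : ℤ) ^ (2 * w + 2) - (q : ℤ) := by
              rw [show 1 + (2 * w + 1) = 2 * w + 2 from by omega, pow_one]; ring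
            rwa [e] at h'
          have hq_le : (q : ℤ) ≤ (q : ℤ) ^ (2 * w + 2) := by
            have := hpow 1 (2 * w + 2) (by omega); rwa [pow_one] at this
          have hs2 := hstep (2 * w + 2) (2 * w + 3) (by omega)
          have hpos1 : (0 : ℤ) < (q : ℤ) ^ (2 * w + 3) + 1 - (q : ℤ) ^ (2 * w + 2) - (q : ℤ) := by
            linarith only [hq_le, hs2]
          have hled := Int.le_of_dvd hpos1 hC'
          have hs4 := hpow (2 * w + 3) (4 * w + 3) (by omega)
          have hs5 := hstep (4 * w + 3) (4 * w + 4) (by omega)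
          have hs6 := hpos (4 * w + 3)
          have hs7 := hpos (2 * w + 2)
          linarith only [hled, hs4, hs5, hs6, hs7, ha]
      · -- r ≥ 2 : residue positive and < N
        have h1' := hpow (2 * w + 3) (r + (2 * w + 1)) (by omega)
        have h2' : (q : ℤ) ^ 2 ≤ (q : ℤ) ^ r := hpow 2 r hr
        have h3' : (4 : ℤ) ≤ (q : ℤ) ^ 2 := by
          calc (4 : ℤ) = 2 * 2 := by norm_num
            _ ≤ (q : ℤ) * (q : ℤ) := by nlinarith [ha]
            _ = (q : ℤ) ^ 2 := (sq (q : ℤ)).symm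
        have hpos1 : (0 : ℤ) < (q : ℤ) ^ (r + (2 * w + 1)) + (q : ℤ) ^ r -
            (q : ℤ) ^ (2 * w + 3) - 1 := by
          linarith only [h1', h2', h3']
        have hled := Int.le_of_dvd hpos1 hC
        have h4' := hpow (r + (2 * w + 1)) (4 * w + 3) (by omega)
        have h5' := hpow r (4 * w + 3) (by omega)
        have h6' := hstep (4 * w + 3) (4 * w + 4) (by omega)
        have h7' := hpos (2 * w + 3)
        linarith only [hled, h4', h5', h6', h7']
end

section
/- Let q be a prime power, m ≥ 4 even with m ≡ 2 (mod 4), n = (q^m-1)/(q+1), and δ₁ = ((q-1)·q^(m-1) - q^((m-2)/2) - 1)/(q+1). Then the q-cyclotomic coset of δ₁ modulo n has size m/2. -/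
theorem stmt_12 (q m : ℕ) (hq : IsPrimePow q) (hm : 4 ≤ m) (hm4 : m % 4 = 2) :
    (((q - 1) * q ^ (m - 1) - q ^ ((m - 2) / 2) - 1) / (q + 1) * q ^ (m / 2)) ≡
        ((q - 1) * q ^ (m - 1) - q ^ ((m - 2) / 2) - 1) / (q + 1)
          [MOD (q ^ m - 1) / (q + 1)] ∧
    ∀ ℓ : ℕ, 0 < ℓ → ℓ < m / 2 →
      ¬ ((((q - 1) * q ^ (m - 1) - q ^ ((m - 2) / 2) - 1) / (q + 1) * q ^ ℓ) ≡
          ((q - 1) * q ^ (m - 1) - q ^ ((m - 2) / 2) - 1) / (q + 1)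
            [MOD (q ^ m - 1) / (q + 1)]) := by
  have hq2 : 2 ≤ q := hq.two_le
  obtain ⟨k, rfl⟩ : ∃ k, m = 2 * k := ⟨m / 2, by omega⟩
  have hkodd : Odd k := by
    refine ⟨k / 2, by omega⟩
  have hk3 : 3 ≤ k := by omega
  -- power facts
  have hP1 : 1 ≤ q ^ (k - 1) := Nat.one_le_pow _ _ (by omega)
  have hpk : q ^ k = q ^ (k - 1) * q := by rw [← pow_succ]; congr 1; omega
  have hPq : q ^ (k - 1) * 2 ≤ q ^ (k - 1) * q := Nat.mul_le_mul_left _ hq2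
  have hXk : 1 ≤ q ^ k := Nat.one_le_pow _ _ (by omega)
  -- A : (q^k+1)/(q+1)
  have hdvdA : (q + 1) ∣ q ^ k + 1 := by
    have h : ((q : ℤ) + 1) ∣ (q : ℤ) ^ k + 1 := by
      have hmod : (q : ℤ) ≡ -1 [ZMOD ((q : ℤ) + 1)] :=
        Int.modEq_iff_dvd.mpr ⟨-1, by ring⟩
      have hpow := hmod.pow k
      rw [Odd.neg_one_pow hkodd] at hpow
      have := hpow.dvd
      rwa [show (-1 : ℤ) - (q : ℤ) ^ k = -((q : ℤ) ^ k + 1) by ring, dvd_neg] at this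
    exact_mod_cast h
  obtain ⟨A, hA⟩ := hdvdA
  have hApos : 0 < A := Nat.pos_of_ne_zero (fun h => by simp [h] at hA)
  -- M
  obtain ⟨M, hM⟩ : ∃ M, q ^ k = M + (q ^ (k - 1) + 1) := ⟨q ^ k - (q ^ (k - 1) + 1), by omega⟩
  -- numerator identity
  have hNum' : (q - 1) * q ^ (2 * k - 1) = (q + 1) * (A * M) + q ^ (k - 1) + 1 := by
    have e1 : (q : ℤ) ^ (2 * k - 1) = (q : ℤ) ^ k * (q : ℤ) ^ (k - 1) := by
      rw [← pow_add]; congr 1; omega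
    have e3 : (q : ℤ) ^ k = (q : ℤ) * (q : ℤ) ^ (k - 1) := by
      rw [← pow_succ']; congr 1; omega
    have hMZ : ((q : ℤ)) ^ k = (M : ℤ) + ((q : ℤ) ^ (k - 1) + 1) := by exact_mod_cast hM
    have hAZ : ((q : ℤ)) ^ k + 1 = ((q : ℤ) + 1) * A := by exact_mod_cast hA
    zify [show 1 ≤ q by omega]
    have hMZ' : (M : ℤ) = (q : ℤ) * (q : ℤ) ^ (k - 1) - (q : ℤ) ^ (k - 1) - 1 := by
      rw [← e3]; linarith
    rw [show ((q:ℤ)+1)*((A:ℤ)*(M:ℤ)) = (((q:ℤ)+1)*A)*M by ring, ← hAZ, e1, hMZ', e3]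
    ring
  have hNum : (q - 1) * q ^ (2 * k - 1) - q ^ (k - 1) - 1 = (q + 1) * (A * M) := by omega
  have hδ : ((q - 1) * q ^ (2 * k - 1) - q ^ ((2 * k - 2) / 2) - 1) / (q + 1) = A * M := by
    rw [show (2 * k - 2) / 2 = k - 1 by omega, hNum]
    exact Nat.mul_div_cancel_left _ (by omega)
  -- modulus identity
  have hn' : q ^ (2 * k) - 1 = (q + 1) * ((q ^ k - 1) * A) := by
    have h2k : 1 ≤ q ^ (2 * k) := Nat.one_le_pow _ _ (by omega)
    zify [hXk, h2k]
    have e2 : (q : ℤ) ^ (2 * k) = (q : ℤ) ^ k * (q : ℤ) ^ k := by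
      rw [two_mul, pow_add]
    have hAZ : ((q : ℤ)) ^ k + 1 = ((q : ℤ) + 1) * A := by exact_mod_cast hA
    linear_combination e2 + ((q:ℤ)^k - 1) * hAZ
  have hn : (q ^ (2 * k) - 1) / (q + 1) = (q ^ k - 1) * A := by
    rw [hn']; exact Nat.mul_div_cancel_left _ (by omega)
  rw [hδ, hn, show 2 * k / 2 = k by omega]
  constructor
  · have hle : A * M ≤ A * M * q ^ k := Nat.le_mul_of_pos_right _ (by omega)
    refine ((Nat.modEq_iff_dvd' hle).mpr ?_).symm
    have hsub : A * M * q ^ k - A * M = A * M * (q ^ k - 1) := by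
      rw [Nat.mul_sub, mul_one]
    rw [hsub]
    exact ⟨M, by ring⟩
  · intro ℓ hl0 hlk hcon
    have hql : 1 ≤ q ^ ℓ := Nat.one_le_pow _ _ (by omega)
    have hle : A * M ≤ A * M * q ^ ℓ := Nat.le_mul_of_pos_right _ (by omega)
    have hd := (Nat.modEq_iff_dvd' hle).mp hcon.symm
    have hsub : A * M * q ^ ℓ - A * M = (M * (q ^ ℓ - 1)) * A := by
      rw [Nat.mul_sub, mul_one]; ring_nf
      rw [Nat.mul_sub]; ring_nf
    rw [hsub] at hd
    have hdM : (q ^ k - 1) ∣ M * (q ^ ℓ - 1) :=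
      (Nat.mul_dvd_mul_iff_right hApos).mp hd
    have hMrel : M + q ^ (k - 1) = q ^ k - 1 := by omega
    have hdiff : (q ^ k - 1) * (q ^ ℓ - 1) - M * (q ^ ℓ - 1) = q ^ (k - 1) * (q ^ ℓ - 1) := by
      rw [← hMrel, add_mul]; omega
    have hd2 : (q ^ k - 1) ∣ q ^ (k - 1) * (q ^ ℓ - 1) := by
      rw [← hdiff]
      exact Nat.dvd_sub (dvd_mul_right _ _) hdM
    have hc1 : Nat.Coprime q (q ^ k - 1) := by
      have hck : Nat.Coprime (q ^ k) (q ^ k - 1) :=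
        (Nat.coprime_self_sub_right hXk).mpr (Nat.coprime_one_right _)
      exact (Nat.coprime_pow_left_iff (show 0 < k by omega) q _).mp hck
    have hcop : Nat.Coprime (q ^ (k - 1)) (q ^ k - 1) := hc1.pow_left _
    have hd3 : (q ^ k - 1) ∣ q ^ ℓ - 1 := (hcop.symm).dvd_of_dvd_mul_left hd2
    have hql2 : q ≤ q ^ ℓ := Nat.le_self_pow (by omega) q
    have hlt : q ^ ℓ < q ^ k := Nat.pow_lt_pow_right (by omega) hlk
    have hge := Nat.le_of_dvd (by omega) hd3
    omega
end

section
/- Let q ≥ 3 be a prime power and m ≥ 1 an integer. Write q - 1 = m·t₁ + t₂ with t₁ ≥ 0 and 0 ≤ t₂ < m, and define S = Σ_{t=1}^{q-1} q^(⌈mt/(q-1)⌉ - 1) with q-adic expansion S = Σ_{i=0}^{m-1} a_i·q^i. If t₂ = 0 then a_i = (q-1)/m for all i ∈ [0, m-1]. If t₂ ≠ 0, let Υ = {⌈mγ/t₂⌉ - 1 : γ = 1, 2, ..., t₂} (using the convention ⌈x - 1⌉ = ⌈x⌉ - 1 for the paper's ⌈mγ/t₂ - 1⌉). Then a_i = ⌈(q-1)/m⌉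 for i ∈ Υ, a_i = ⌊(q-1)/m⌋ for i ∈ [0, m-1] \ Υ, and Σ_{i=0}^{m-1} a_i = q - 1. -/
/-!
With `N = q - 1`, the exponent `⌈mt/N⌉ - 1` equals `j` exactly when `⌊Nj/m⌋ < t ≤ ⌊N(j+1)/m⌋`, so
`S = ∑_{j<m} a_j q^j` with `a_j = ⌊N(j+1)/m⌋ - ⌊Nj/m⌋ ≤ N < q`; hence the `a_j` are the `q`-adic
digits of `S`, and they telescope to `N`. Writing `N = m t₁ + t₂` gives
`a_j = t₁ + (⌊t₂(j+1)/m⌋ - ⌊t₂j/m⌋)`, where the bracket is `0` or `1`, and by the same count with `t₂`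
in place of `N` it is `1` exactly when some `γ ∈ [1, t₂]` has `⌈mγ/t₂⌉ - 1 = j`, i.e. when `j ∈ Υ`.
-/

open Finset

def blockCount (N m j : ℕ) : ℕ := N * (j + 1) / m - N * j / m

lemma add_sub_one_div_sub_one_eq_iff {a N j : ℕ} (hN : 0 < N) (ha : 0 < a) :
    (a + N - 1) / N - 1 = j ↔ N * j < a ∧ a ≤ N * (j + 1) := by
  obtain ⟨c, rfl⟩ : ∃ c, a = c + 1 := ⟨a - 1, by omega⟩
  rw [show c + 1 + N - 1 = c + 1 * N by omega, Nat.add_mul_div_right _ _ hN, Nat.add_sub_cancel,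
    Nat.div_eq_iff hN, mul_comm j N, mul_add, mul_one]
  omega

lemma ceilDiv_sub_one_eq_iff {N m t j : ℕ} (hN : 0 < N) (hm : 0 < m) (ht : 0 < t) :
    (m * t + N - 1) / N - 1 = j ↔ t ∈ Ioc (N * j / m) (N * (j + 1) / m) := by
  rw [add_sub_one_div_sub_one_eq_iff hN (Nat.mul_pos hm ht), mem_Ioc, Nat.div_lt_iff_lt_mul hm,
    Nat.le_div_iff_mul_le hm, mul_comm t m]

lemma filter_Icc_ceilDiv_sub_one_eq {N m j : ℕ} (hN : 0 < N) (hm : 0 < m) (hj : j < m) :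
    {t ∈ Icc 1 N | (m * t + N - 1) / N - 1 = j} = Ioc (N * j / m) (N * (j + 1) / m) := by
  ext t
  rw [mem_filter, mem_Icc]
  constructor
  · rintro ⟨⟨ht, -⟩, h⟩
    exact (ceilDiv_sub_one_eq_iff hN hm ht).1 h
  · intro h
    have hle : N * (j + 1) / m ≤ N := by
      calc N * (j + 1) / m ≤ N * m / m := Nat.div_le_div_right (Nat.mul_le_mul_left _ hj)
        _ = N := Nat.mul_div_cancel N hm
    have ht : 0 < t := Nat.zero_lt_of_lt (mem_Ioc.1 h).1
    exact ⟨⟨ht, (mem_Ioc.1 h).2.trans hle⟩, (ceilDiv_sub_one_eq_iff hN hm ht).2 h⟩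

lemma card_filter_Icc_ceilDiv_sub_one_eq {N m j : ℕ} (hN : 0 < N) (hm : 0 < m) (hj : j < m) :
    #{t ∈ Icc 1 N | (m * t + N - 1) / N - 1 = j} = blockCount N m j := by
  rw [filter_Icc_ceilDiv_sub_one_eq hN hm hj, Nat.card_Ioc, blockCount]

lemma ceilDiv_sub_one_lt {N m t : ℕ} (hN : 0 < N) (hm : 0 < m) (ht : t ≤ N) :
    (m * t + N - 1) / N - 1 < m := by
  have : (m * t + N - 1) / N < m + 1 := by
    rw [Nat.div_lt_iff_lt_mul hN, add_mul, one_mul]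
    have := Nat.mul_le_mul_left m ht
    omega
  omega

lemma sum_Icc_ceilDiv_sub_one {M : Type*} [AddCommMonoid M] {N m : ℕ} (hN : 0 < N) (hm : 0 < m)
    (g : ℕ → M) :
    ∑ t ∈ Icc 1 N, g ((m * t + N - 1) / N - 1) = ∑ j ∈ range m, blockCount N m j • g j := by
  rw [← sum_fiberwise_of_maps_to (g := fun t => (m * t + N - 1) / N - 1)
    (fun t ht => mem_range.2 (ceilDiv_sub_one_lt hN hm (mem_Icc.1 ht).2))]
  refine sum_congr rfl fun j hj => ?_
  rw [sum_congr rfl fun t ht => congrArg g (mem_filter.1 ht).2, sum_const,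
    card_filter_Icc_ceilDiv_sub_one_eq hN hm (mem_range.1 hj)]

lemma sum_blockCount {N m : ℕ} (hm : 0 < m) : ∑ j ∈ range m, blockCount N m j = N := by
  have hmono : Monotone fun j => N * j / m := fun _ _ h =>
    Nat.div_le_div_right (Nat.mul_le_mul_left _ h)
  simp only [blockCount]
  rw [sum_range_tsub hmono m, Nat.mul_div_cancel N hm, mul_zero, Nat.zero_div, Nat.sub_zero]

lemma blockCount_le (N m j : ℕ) (hm : 0 < m) : blockCount N m j ≤ N := by
  have : N * (j + 1) / m ≤ N * j / m + N := by
    calc N * (j + 1) / m ≤ (N * j + N * m) / m :=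
          Nat.div_le_div_right (by nlinarith)
      _ = N * j / m + N := Nat.add_mul_div_right _ _ hm
  unfold blockCount; omega

lemma blockCount_le_one {N m : ℕ} (j : ℕ) (h : N ≤ m) : blockCount N m j ≤ 1 := by
  rcases Nat.eq_zero_or_pos m with rfl | hm
  · simp [blockCount]
  have : N * (j + 1) / m ≤ N * j / m + 1 := by
    calc N * (j + 1) / m ≤ (N * j + m) / m := Nat.div_le_div_right (by nlinarith)
      _ = N * j / m + 1 := Nat.add_div_right _ hm
  unfold blockCount; omega

lemma blockCount_mul_add {m : ℕ} (t₁ t₂ j : ℕ) (hm : 0 < m) :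
    blockCount (m * t₁ + t₂) m j = t₁ + blockCount t₂ m j := by
  have key : ∀ k, (m * t₁ + t₂) * k / m = t₁ * k + t₂ * k / m := fun k => by
    rw [add_mul, mul_assoc, Nat.mul_add_div hm]
  have hmono : t₂ * j / m ≤ t₂ * (j + 1) / m := Nat.div_le_div_right (by nlinarith)
  unfold blockCount
  rw [key, key, mul_add, mul_one]
  omega

lemma blockCount_pos_iff {N m j : ℕ} (hN : 0 < N) (hm : 0 < m) (hj : j < m) :
    0 < blockCount N m j ↔ ∃ γ, 1 ≤ γ ∧ γ ≤ N ∧ j = (m * γ + N - 1) / N - 1 := by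
  rw [← card_filter_Icc_ceilDiv_sub_one_eq hN hm hj, card_pos]
  simp only [Finset.Nonempty, mem_filter, mem_Icc, and_assoc, eq_comm]

lemma digit_sum_range_mul_pow {q : ℕ} :
    ∀ {m j : ℕ} {a : ℕ → ℕ}, (∀ i < m, a i < q) → j < m →
      (∑ i ∈ range m, a i * q ^ i) / q ^ j % q = a j
  | 0, _, _, _, hj => absurd hj (Nat.not_lt_zero _)
  | m + 1, j, a, ha, hj => by
    have hsplit :
        ∑ i ∈ range (m + 1), a i * q ^ i = a 0 + q * ∑ i ∈ range m, a (i + 1) * q ^ i := by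
      rw [sum_range_succ', mul_sum]
      simp only [pow_succ, pow_zero, mul_one]
      rw [add_comm]; congr 1; refine sum_congr rfl fun i _ => by ring
    have ha0 := ha 0 (Nat.succ_pos m)
    rw [hsplit]
    cases j with
    | zero => rw [pow_zero, Nat.div_one, Nat.add_mul_mod_self_left, Nat.mod_eq_of_lt ha0]
    | succ j =>
      rw [pow_succ', ← Nat.div_div_eq_div_mul, Nat.add_mul_div_left _ _ (by omega),
        Nat.div_eq_of_lt ha0, zero_add]
      exact digit_sum_range_mul_pow (fun i hi => ha (i + 1) (by omega)) (by omega)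

lemma digit_sum_pow_ceilDiv_sub_one {q m i : ℕ} (hq : 2 ≤ q) (hm : 0 < m) (hi : i < m) :
    (∑ t ∈ Icc 1 (q - 1), q ^ ((m * t + q - 2) / (q - 1) - 1)) / q ^ i % q =
      blockCount (q - 1) m i := by
  have hN : 0 < q - 1 := by omega
  have hS : ∑ t ∈ Icc 1 (q - 1), q ^ ((m * t + q - 2) / (q - 1) - 1) =
      ∑ j ∈ range m, blockCount (q - 1) m j * q ^ j := by
    rw [sum_congr rfl fun t _ => by rw [show m * t + q - 2 = m * t + (q - 1) - 1 by omega],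
      sum_Icc_ceilDiv_sub_one hN hm (q ^ ·)]
    simp only [smul_eq_mul]
  rw [hS, digit_sum_range_mul_pow (fun j _ => (blockCount_le _ _ _ hm).trans_lt (by omega)) hi]

theorem stmt_13_general (q m t₁ t₂ : ℕ) (hq3 : 3 ≤ q) (hm : 1 ≤ m)
    (hdecomp : q - 1 = m * t₁ + t₂) (ht₂ : t₂ < m) :
    (t₂ = 0 →
      ∀ i < m,
        ((∑ t ∈ Finset.Icc 1 (q - 1), q ^ ((m * t + q - 2) / (q - 1) - 1)) / q ^ i) % q =
          (q - 1) / m) ∧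
    (t₂ ≠ 0 →
      (∀ i < m, (∃ γ : ℕ, 1 ≤ γ ∧ γ ≤ t₂ ∧ i = (m * γ + t₂ - 1) / t₂ - 1) →
          ((∑ t ∈ Finset.Icc 1 (q - 1), q ^ ((m * t + q - 2) / (q - 1) - 1)) / q ^ i) % q =
            (q - 1 + m - 1) / m) ∧
      (∀ i < m, ¬ (∃ γ : ℕ, 1 ≤ γ ∧ γ ≤ t₂ ∧ i = (m * γ + t₂ - 1) / t₂ - 1) →
          ((∑ t ∈ Finset.Icc 1 (q - 1), q ^ ((m * t + q - 2) / (q - 1) - 1)) / q ^ i) % q =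
            (q - 1) / m) ∧
      (∑ i ∈ Finset.range m,
          ((∑ t ∈ Finset.Icc 1 (q - 1), q ^ ((m * t + q - 2) / (q - 1) - 1)) / q ^ i) % q) =
        q - 1) := by
  have hdigit : ∀ i < m,
      ((∑ t ∈ Icc 1 (q - 1), q ^ ((m * t + q - 2) / (q - 1) - 1)) / q ^ i) % q =
        t₁ + blockCount t₂ m i := fun i hi => by
    rw [digit_sum_pow_ceilDiv_sub_one (by omega) hm hi, hdecomp, blockCount_mul_add _ _ _ hm]
  have hfloor : (q - 1) / m = t₁ := by
    rw [hdecomp, Nat.mul_add_div hm, Nat.div_eq_of_lt ht₂, add_zero]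
  refine ⟨fun h0 i hi => ?_, fun ht₂0 => ⟨fun i hi hΥ => ?_, fun i hi hΥ => ?_, ?_⟩⟩
  · simp [hdigit i hi, hfloor, h0, blockCount]
  · have hceil : (q - 1 + m - 1) / m = t₁ + 1 := by
      rw [show q - 1 + m - 1 = (t₂ - 1) + m * (t₁ + 1) by rw [hdecomp]; ring_nf; omega,
        Nat.add_mul_div_left _ _ hm, Nat.div_eq_of_lt (by omega), zero_add]
    have hpos := (blockCount_pos_iff (by omega) hm hi).2 hΥ
    have hle := blockCount_le_one i ht₂.le
    rw [hdigit i hi, hceil]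
    omega
  · have hzero := mt (blockCount_pos_iff (by omega) hm hi).1 hΥ
    rw [hdigit i hi, hfloor]
    omega
  · rw [sum_congr rfl fun i hi => digit_sum_pow_ceilDiv_sub_one (by omega) hm (mem_range.1 hi),
      sum_blockCount hm]

theorem stmt_13 (q m t₁ t₂ : ℕ) (hq : IsPrimePow q) (hq3 : 3 ≤ q) (hm : 1 ≤ m)
    (hdecomp : q - 1 = m * t₁ + t₂) (ht₂ : t₂ < m) :
    (t₂ = 0 →
      ∀ i < m,
        ((∑ t ∈ Finset.Icc 1 (q - 1), q ^ ((m * t + q - 2) / (q - 1) - 1)) / q ^ i) % q =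
          (q - 1) / m) ∧
    (t₂ ≠ 0 →
      (∀ i < m, (∃ γ : ℕ, 1 ≤ γ ∧ γ ≤ t₂ ∧ i = (m * γ + t₂ - 1) / t₂ - 1) →
          ((∑ t ∈ Finset.Icc 1 (q - 1), q ^ ((m * t + q - 2) / (q - 1) - 1)) / q ^ i) % q =
            (q - 1 + m - 1) / m) ∧
      (∀ i < m, ¬ (∃ γ : ℕ, 1 ≤ γ ∧ γ ≤ t₂ ∧ i = (m * γ + t₂ - 1) / t₂ - 1) →
          ((∑ t ∈ Finset.Icc 1 (q - 1), q ^ ((m * t + q - 2) / (q - 1) - 1)) / q ^ i) % q =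
            (q - 1) / m) ∧
      (∑ i ∈ Finset.range m,
          ((∑ t ∈ Finset.Icc 1 (q - 1), q ^ ((m * t + q - 2) / (q - 1) - 1)) / q ^ i) % q) =
        q - 1) :=
  stmt_13_general q m t₁ t₂ hq3 hm hdecomp ht₂
end

section
/- Let q ≥ 3 be a prime power and m ≥ 4 an integer. Set θ = q^(m-1) - 1 - (Σ_{t=1}^{q-2} q^(⌈mt/(q-1)⌉-1) - q + 2)/(q-1). Equivalently θ = (q^m - Σ_{t=1}^{q-1} q^(⌈mt/(q-1)⌉-1) - 1)/(q-1). Then θ is a q-cyclotomic coset leader modulo n = (q^m - 1)/(q-1). -/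
/-!
Write `P = q^m - 1` and `S = ∑ t, q^(e t)` with `e t = ⌈mt/(q-1)⌉ - 1`, so that `(q-1)θ = P - S`
and `(q-1)n = P`. Multiplying by `q^j` rotates the `q`-ary digits cyclically: `S q^j ≡ T (mod P)`
with `T = ∑ t, q^((e t + j) % m)`, hence `(q-1)(θ q^j mod n) = P - T`, and it suffices that
`T ≤ S`. Since `q^a = q^m - (q-1) ∑_{a ≤ i < m} q^i`, a sum `∑ t, q^(a t)` can only decrease
when every count `#{t | a t < r}` grows, so it is enough that each window `[0, r)` holds at least
as many rotated exponents as original ones. The exponents `e t` are spread as evenly as possible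
over `[0, m)`: `[0, r)` holds exactly `⌊(q-1)r/m⌋` of them, and every cyclic window of length `r`
holds at least that many.
-/

open Finset

section LayerCake

variable {ι : Type*} {s : Finset ι} {q m : ℕ}

lemma pow_add_sub_one_mul_sum_Ico (hq : 0 < q) {a : ℕ} (ham : a ≤ m) :
    q ^ a + (q - 1) * ∑ i ∈ Ico a m, q ^ i = q ^ m := by
  have h := geom_sum_Ico_mul (q : ℤ) ham
  zify [hq]
  linarith

lemma sum_pow_add_sub_one_mul_sum_card_filter (hq : 0 < q) {a : ι → ℕ} (ha : ∀ t ∈ s, a t ≤ m) :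
    ∑ t ∈ s, q ^ a t + (q - 1) * ∑ i ∈ range m, #{t ∈ s | a t < i + 1} * q ^ i = #s * q ^ m := by
  have hdigits : ∀ t ∈ s,
      q ^ a t + (q - 1) * ∑ i ∈ range m, (if a t < i + 1 then q ^ i else 0) = q ^ m := by
    intro t ht
    rw [← sum_filter, ← pow_add_sub_one_mul_sum_Ico hq (ha t ht)]
    congr 3
    ext i
    simp only [mem_filter, mem_range, mem_Ico]
    omega
  calc _ = ∑ t ∈ s, (q ^ a t + (q - 1) * ∑ i ∈ range m, (if a t < i + 1 then q ^ i else 0)) := by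
        rw [sum_add_distrib, ← mul_sum, sum_comm]
        congr 2
        refine sum_congr rfl fun i _ => ?_
        rw [← sum_filter, sum_const, smul_eq_mul]
    _ = #s * q ^ m := by rw [sum_congr rfl hdigits, sum_const, smul_eq_mul]

theorem sum_pow_le_sum_pow_of_card_filter_lt_le (hq : 0 < q) {a b : ι → ℕ}
    (ha : ∀ t ∈ s, a t ≤ m) (hb : ∀ t ∈ s, b t ≤ m)
    (h : ∀ r ≤ m, #{t ∈ s | a t < r} ≤ #{t ∈ s | b t < r}) :
    ∑ t ∈ s, q ^ b t ≤ ∑ t ∈ s, q ^ a t := by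
  have hA := sum_pow_add_sub_one_mul_sum_card_filter hq ha
  have hB := sum_pow_add_sub_one_mul_sum_card_filter hq hb
  have hcount : ∑ i ∈ range m, #{t ∈ s | a t < i + 1} * q ^ i ≤
      ∑ i ∈ range m, #{t ∈ s | b t < i + 1} * q ^ i :=
    sum_le_sum fun i hi => Nat.mul_le_mul_right _ (h _ (mem_range.1 hi))
  have hscaled := Nat.mul_le_mul_left (q - 1) hcount
  omega

lemma sum_pow_lt_pow {a : ι → ℕ} (hs : #s < q) (hm : 0 < m) (ha : ∀ t ∈ s, a t < m) :
    ∑ t ∈ s, q ^ a t < q ^ m :=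
  calc ∑ t ∈ s, q ^ a t ≤ ∑ _t ∈ s, q ^ (m - 1) :=
        sum_le_sum fun t ht => Nat.pow_le_pow_right (by omega) (by have := ha t ht; omega)
    _ = #s * q ^ (m - 1) := by rw [sum_const, smul_eq_mul]
    _ < q * q ^ (m - 1) := Nat.mul_lt_mul_of_pos_right hs (pow_pos (by omega) _)
    _ = q ^ m := by rw [← pow_succ', Nat.sub_add_cancel hm]

end LayerCake

section Congruences

variable {ι : Type*} {q : ℕ}

lemma sum_pow_modEq_card (hq : 0 < q) (s : Finset ι) (a : ι → ℕ) :
    ∑ t ∈ s, q ^ a t ≡ #s [MOD q - 1] := by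
  have h1 : q ≡ 1 [MOD q - 1] := Nat.modEq_sub hq
  calc ∑ t ∈ s, q ^ a t ≡ ∑ _t ∈ s, 1 [MOD q - 1] :=
        Nat.ModEq.sum fun t _ => by simpa only [one_pow] using h1.pow (a t)
    _ = #s := by rw [sum_const, smul_eq_mul, mul_one]

lemma pow_modEq_pow_mod (hq : 0 < q) (a m : ℕ) : q ^ a ≡ q ^ (a % m) [MOD q ^ m - 1] := by
  have h1 : q ^ m ≡ 1 [MOD q ^ m - 1] := Nat.modEq_sub (Nat.one_le_pow _ _ hq)
  calc q ^ a = (q ^ m) ^ (a / m) * q ^ (a % m) := by rw [← pow_mul, ← pow_add, Nat.div_add_mod]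
    _ ≡ 1 ^ (a / m) * q ^ (a % m) [MOD q ^ m - 1] := (h1.pow _).mul_right _
    _ = q ^ (a % m) := by rw [one_pow, one_mul]

lemma sum_pow_mul_pow_modEq (hq : 0 < q) (s : Finset ι) (a : ι → ℕ) (m j : ℕ) :
    (∑ t ∈ s, q ^ a t) * q ^ j ≡ ∑ t ∈ s, q ^ ((a t + j) % m) [MOD q ^ m - 1] := by
  rw [sum_mul]
  exact Nat.ModEq.sum fun t _ => by rw [← pow_add]; exact pow_modEq_pow_mod hq _ _

lemma sub_mul_mod_eq_sub {P S T c : ℕ} (hSP : S ≤ P) (hT : 0 < T) (hTP : T ≤ P)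
    (h : S * c ≡ T [MOD P]) : (P - S) * c % P = P - T := by
  have hsum : (P - S) * c + T ≡ (P - T) + T [MOD P] :=
    calc (P - S) * c + T ≡ (P - S) * c + S * c [MOD P] := h.symm.add_left _
      _ = P * c := by rw [← add_mul, Nat.sub_add_cancel hSP]
      _ ≡ 0 [MOD P] := Nat.modEq_zero_iff_dvd.2 (dvd_mul_right _ _)
      _ ≡ (P - T) + T [MOD P] := by
        rw [Nat.sub_add_cancel hTP]; exact (Nat.modEq_zero_iff_dvd.2 dvd_rfl).symm
  rw [Nat.ModEq.add_right_cancel' T hsum, Nat.mod_eq_of_lt (by omega)]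

lemma sub_div_le_sub_div_mul_mod_div {d P S T c : ℕ} (hd : 0 < d) (hdP : d ∣ P) (hdS : d ∣ S)
    (hSP : S ≤ P) (hT : 0 < T) (hTS : T ≤ S) (h : S * c ≡ T [MOD P]) :
    (P - S) / d ≤ (P - S) / d * c % (P / d) := by
  obtain ⟨p, rfl⟩ := hdP
  obtain ⟨s, rfl⟩ := hdS
  rw [← Nat.mul_sub, Nat.mul_div_cancel_left _ hd, Nat.mul_div_cancel_left _ hd]
  refine Nat.le_of_mul_le_mul_left ?_ hd
  rw [← Nat.mul_mod_mul_left, ← mul_assoc, Nat.mul_sub, sub_mul_mod_eq_sub hSP hT (hTS.trans hSP) h]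
  omega

end Congruences

lemma Nat.add_mod_lt_iff {x j m r : ℕ} (hx : x < m) (hj : j < m) :
    (x + j) % m < r ↔ x + j < r ∨ m ≤ x + j ∧ x + j < m + r := by
  rcases lt_or_ge (x + j) m with h | h
  · rw [Nat.mod_eq_of_lt h]; omega
  · rw [Nat.mod_eq_sub_mod h, Nat.mod_eq_of_lt (by omega)]; omega

def spreadExp (k m t : ℕ) : ℕ := m * t ⌈/⌉ k - 1

section SpreadExp

variable {k m : ℕ}

lemma spreadExp_lt_iff (hk : 0 < k) {t : ℕ} (hmt : 0 < m * t) (s : ℕ) :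
    spreadExp k m t < s ↔ m * t ≤ k * s := by
  have hpos : 0 < m * t ⌈/⌉ k := by
    by_contra! h
    exact absurd ((ceilDiv_le_iff_le_mul hk).1 h) (by omega)
  rw [spreadExp, ← ceilDiv_le_iff_le_mul hk]
  omega

lemma spreadExp_lt (hk : 0 < k) (hm : 0 < m) {t : ℕ} (ht : t ∈ Icc 1 k) :
    spreadExp k m t < m := by
  rw [mem_Icc] at ht
  rw [spreadExp_lt_iff hk (Nat.mul_pos hm ht.1), mul_comm k]
  exact Nat.mul_le_mul_left m ht.2

lemma card_filter_spreadExp_lt (hk : 0 < k) (hm : 0 < m) {s : ℕ} (hs : s ≤ m) :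
    #{t ∈ Icc 1 k | spreadExp k m t < s} = k * s / m := by
  have hle : k * s / m ≤ k :=
    Nat.div_le_of_le_mul (by rw [mul_comm m]; exact Nat.mul_le_mul_left k hs)
  suffices {t ∈ Icc 1 k | spreadExp k m t < s} = Icc 1 (k * s / m) by simp [this]
  ext t
  simp only [mem_filter, mem_Icc]
  constructor
  · rintro ⟨⟨ht1, -⟩, hts⟩
    rw [spreadExp_lt_iff hk (Nat.mul_pos hm ht1), mul_comm] at hts
    exact ⟨ht1, (Nat.le_div_iff_mul_le hm).2 hts⟩
  · rintro ⟨ht1, hts⟩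
    refine ⟨⟨ht1, hts.trans hle⟩, ?_⟩
    rw [spreadExp_lt_iff hk (Nat.mul_pos hm ht1), mul_comm]
    exact (Nat.le_div_iff_mul_le hm).1 hts

lemma card_filter_spreadExp_mem_Ico (hk : 0 < k) (hm : 0 < m) {a b : ℕ} (hab : a ≤ b) (hb : b ≤ m) :
    #{t ∈ Icc 1 k | a ≤ spreadExp k m t ∧ spreadExp k m t < b} = k * b / m - k * a / m := by
  have hsub : {t ∈ Icc 1 k | spreadExp k m t < a} ⊆ {t ∈ Icc 1 k | spreadExp k m t < b} :=
    monotone_filter_right _ fun t ht => by omega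
  have hdiff : {t ∈ Icc 1 k | a ≤ spreadExp k m t ∧ spreadExp k m t < b} =
      {t ∈ Icc 1 k | spreadExp k m t < b} \ {t ∈ Icc 1 k | spreadExp k m t < a} := by
    ext t
    simp only [mem_filter, mem_sdiff]
    grind
  rw [hdiff, card_sdiff_of_subset hsub, card_filter_spreadExp_lt hk hm hb,
    card_filter_spreadExp_lt hk hm (hab.trans hb)]

lemma div_le_card_filter_spreadExp_add_mod_lt (hk : 0 < k) (hm : 0 < m) {j r : ℕ} (hj : j < m)
    (hr : r ≤ m) : k * r / m ≤ #{t ∈ Icc 1 k | (spreadExp k m t + j) % m < r} := by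
  rcases le_or_gt r j with hrj | hjr
  · -- the cyclic window is `[m - j, m - j + r)`
    have hsub : {t ∈ Icc 1 k | m - j ≤ spreadExp k m t ∧ spreadExp k m t < m - j + r} ⊆
        {t ∈ Icc 1 k | (spreadExp k m t + j) % m < r} := by
      intro t
      simp only [mem_filter]
      rintro ⟨ht, hlo, hhi⟩
      exact ⟨ht, (Nat.add_mod_lt_iff (spreadExp_lt hk hm ht) hj).2 (by omega)⟩
    have hcard := card_le_card hsub
    rw [card_filter_spreadExp_mem_Ico hk hm (by omega) (by omega)] at hcard
    have hsuper := Nat.div_add_div_le_add_div (x := k * (m - j)) (y := k * r) (z := m)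
    rw [← mul_add] at hsuper
    omega
  · -- the cyclic window is the complement of `[r - j, m - j)`
    have hsub : Icc 1 k \ {t ∈ Icc 1 k | r - j ≤ spreadExp k m t ∧ spreadExp k m t < m - j} ⊆
        {t ∈ Icc 1 k | (spreadExp k m t + j) % m < r} := by
      intro t
      simp only [mem_sdiff, mem_filter, not_and, not_lt]
      rintro ⟨ht, hout⟩
      have hlt := spreadExp_lt hk hm ht
      exact ⟨ht, (Nat.add_mod_lt_iff hlt hj).2 (by have := hout ht; omega)⟩
    have hcard := card_le_card hsub
    rw [card_sdiff_of_subset (filter_subset _ _), card_filter_spreadExp_mem_Ico hk hm (by omega)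
      (by omega), Nat.card_Icc, Nat.add_sub_cancel] at hcard
    have hsuper := Nat.div_add_div_le_add_div (x := k * r) (y := k * (m - j)) (z := m)
    rw [← mul_add, show r + (m - j) = r - j + m by omega, mul_add,
      Nat.add_mul_div_right _ _ hm] at hsuper
    have hmono : k * (r - j) / m ≤ k * (m - j) / m :=
      Nat.div_le_div_right (Nat.mul_le_mul_left k (by omega))
    omega

lemma sum_pow_spreadExp_add_mod_le (hk : 0 < k) (hm : 0 < m) {q : ℕ} (hq : 0 < q) (j : ℕ) :
    ∑ t ∈ Icc 1 k, q ^ ((spreadExp k m t + j) % m) ≤ ∑ t ∈ Icc 1 k, q ^ spreadExp k m t := by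
  refine sum_pow_le_sum_pow_of_card_filter_lt_le hq (fun t ht => (spreadExp_lt hk hm ht).le)
    (fun t _ => (Nat.mod_lt _ hm).le) fun r hr => ?_
  rw [card_filter_spreadExp_lt hk hm hr]
  simpa only [Nat.add_mod_mod] using
    div_le_card_filter_spreadExp_add_mod_lt hk hm (Nat.mod_lt j hm) hr

end SpreadExp

theorem stmt_15_general (q m : ℕ) (hq3 : 3 ≤ q) (hm : 4 ≤ m) :
    ∀ j : ℕ,
      (q ^ m - (∑ t ∈ Finset.Icc 1 (q - 1), q ^ ((m * t + q - 2) / (q - 1) - 1)) - 1) / (q - 1) ≤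
        ((q ^ m - (∑ t ∈ Finset.Icc 1 (q - 1), q ^ ((m * t + q - 2) / (q - 1) - 1)) - 1) / (q - 1) *
            q ^ j) %
          ((q ^ m - 1) / (q - 1)) := by
  intro j
  have hq : 0 < q := by omega
  have hk : 0 < q - 1 := by omega
  have hm0 : 0 < m := by omega
  have hexp : ∀ t, (m * t + q - 2) / (q - 1) - 1 = spreadExp (q - 1) m t := fun t => by
    rw [spreadExp, Nat.ceilDiv_eq_add_pred_div, show m * t + (q - 1) - 1 = m * t + q - 2 by omega]
  simp only [hexp, Nat.sub_right_comm (q ^ m)]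
  set S := ∑ t ∈ Icc 1 (q - 1), q ^ spreadExp (q - 1) m t
  have hSP : S < q ^ m :=
    sum_pow_lt_pow (by rw [Nat.card_Icc]; omega) hm0 fun t ht => spreadExp_lt hk hm0 ht
  have hdvdS : q - 1 ∣ S := by
    have hcard := sum_pow_modEq_card hq (Icc 1 (q - 1)) (spreadExp (q - 1) m)
    rw [Nat.card_Icc, Nat.add_sub_cancel] at hcard
    exact Nat.modEq_zero_iff_dvd.1 (hcard.trans (Nat.modEq_zero_iff_dvd.2 dvd_rfl))
  have hTpos : 0 < ∑ t ∈ Icc 1 (q - 1), q ^ ((spreadExp (q - 1) m t + j) % m) :=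
    sum_pos (fun t _ => pow_pos hq _) ⟨1, mem_Icc.2 ⟨le_rfl, by omega⟩⟩
  exact sub_div_le_sub_div_mul_mod_div hk (Nat.sub_one_dvd_pow_sub_one q m) hdvdS (by omega) hTpos
    (sum_pow_spreadExp_add_mod_le hk hm0 hq j) (sum_pow_mul_pow_modEq hq _ _ m j)

theorem stmt_15 (q m : ℕ) (hq : IsPrimePow q) (hq3 : 3 ≤ q) (hm : 4 ≤ m) :
    ∀ j : ℕ,
      (q ^ m - (∑ t ∈ Finset.Icc 1 (q - 1), q ^ ((m * t + q - 2) / (q - 1) - 1)) - 1) / (q - 1) ≤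
        ((q ^ m - (∑ t ∈ Finset.Icc 1 (q - 1), q ^ ((m * t + q - 2) / (q - 1) - 1)) - 1) / (q - 1) *
            q ^ j) %
          ((q ^ m - 1) / (q - 1)) :=
  stmt_15_general q m hq3 hm
end
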